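/- arXiv:2511.04572 — 10 statements merged into one kernel-verified Lean document; each statement's English description precedes it below -/
import Mathlib

section
/- Let u: ℝ^m_{≥0} → ℝ_{≥0} be continuous, non-decreasing, locally nonsatiated, and quasi-concave, and let v(p, B) = sup { u(x) : x ≥ 0, ⟨p, x⟩ ≤ B } be its indirect utility. Then for any B > 0 and any x ∈ ℝ^m_{≥0} with x ≠ 0, u(x) = inf { v(p, B) : p ≥ 0, ⟨x, p⟩ ≤ B }. -/
private lemma clm_eq_sum {m : ℕ} (f : (Fin m → ℝ) →L[ℝ] ℝ) (y : Fin m → ℝ) :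
    f y = ∑ j, y j * f (Pi.single j 1) := by
  have h : y = ∑ j, y j • (Pi.single j (1:ℝ) : Fin m → ℝ) := by
    funext k
    simp [Pi.single_apply]
  conv_lhs => rw [h]
  rw [map_sum]
  simp [smul_eq_mul]

theorem stmt0 {m : ℕ} (u : (Fin m → ℝ) → ℝ)
    (hnn : ∀ x : Fin m → ℝ, 0 ≤ x → 0 ≤ u x)
    (hcont : ContinuousOn u {x : Fin m → ℝ | 0 ≤ x})
    (hmono : ∀ x y : Fin m → ℝ, 0 ≤ y → y ≤ x → u y ≤ u x)
    (hlns : ∀ x : Fin m → ℝ, 0 ≤ x → ∀ ε : ℝ, 0 < ε →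
      ∃ y : Fin m → ℝ, 0 ≤ y ∧ ‖x - y‖ ≤ ε ∧ u x < u y)
    (hqc : ∀ α : ℝ, Convex ℝ {x : Fin m → ℝ | 0 ≤ x ∧ α ≤ u x})
    (v : (Fin m → ℝ) → ℝ → ℝ)
    (hv : ∀ p : Fin m → ℝ, ∀ B : ℝ, 0 ≤ p → 0 < B →
      IsLUB {t : ℝ | ∃ x : Fin m → ℝ, 0 ≤ x ∧ ∑ j, p j * x j ≤ B ∧ u x = t} (v p B))
    (B : ℝ) (hB : 0 < B) (x : Fin m → ℝ) (hx : 0 ≤ x) (hx0 : x ≠ 0) :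
    IsGLB {t : ℝ | ∃ p : Fin m → ℝ, 0 ≤ p ∧ ∑ j, x j * p j ≤ B ∧ v p B = t} (u x) := by
  constructor
  · -- u x is a lower bound
    rintro t ⟨p, hp, hpx, rfl⟩
    have hlub := hv p B hp hB
    exact hlub.1 ⟨x, hx, by
      rw [show ∑ j, p j * x j = ∑ j, x j * p j from Finset.sum_congr rfl
        (fun j _ => mul_comm _ _)]; exact hpx, rfl⟩
  · -- any lower bound b satisfies b ≤ u x
    intro b hb
    refine le_of_forall_pos_le_add fun ε hε => ?_
    set c := u x with hc
    set K : Set (Fin m → ℝ) := {y | 0 ≤ y ∧ c + ε ≤ u y} with hK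
    by_cases hKe : K = ∅
    · -- p = 0 works
      have hmem : v 0 B ∈ {t : ℝ | ∃ p : Fin m → ℝ, 0 ≤ p ∧ ∑ j, x j * p j ≤ B ∧ v p B = t} := by
        refine ⟨0, le_refl _, ?_, rfl⟩
        simp [le_of_lt hB]
      have hub : v 0 B ≤ c + ε := by
        refine (hv 0 B (le_refl _) hB).2 ?_
        rintro t ⟨y, hy, -, rfl⟩
        by_contra h
        push_neg at h
        have hyK : y ∈ K := ⟨hy, h.le⟩
        rw [hKe] at hyK
        exact hyK
      exact le_trans (hb hmem) hub
    · -- K nonempty: separate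
      have hKconv : Convex ℝ K := hqc (c + ε)
      have hor : IsClosed {y : Fin m → ℝ | 0 ≤ y} := by
        have : {y : Fin m → ℝ | 0 ≤ y} = Set.Ici 0 := rfl
        rw [this]; exact isClosed_Ici
      have hKcl : IsClosed K := by
        have h1 : K = {y : Fin m → ℝ | 0 ≤ y} ∩ u ⁻¹' (Set.Ici (c + ε)) := by
          ext y; simp [hK, Set.mem_setOf_eq, and_comm]
        rw [h1]
        exact hcont.preimage_isClosed_of_isClosed hor isClosed_Ici
      have hxK : x ∉ K := fun h => absurd h.2 (by simp [hc]; linarith)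
      obtain ⟨f, α, hfx, hfK⟩ := geometric_hahn_banach_point_closed hKconv hKcl hxK
      obtain ⟨y0, hy0⟩ := Set.nonempty_iff_ne_empty.mpr hKe
      set p : Fin m → ℝ := fun j => f (Pi.single j 1) with hp
      -- p ≥ 0
      have hpnn : ∀ j, 0 ≤ p j := by
        intro j
        by_contra h
        push_neg at h
        have hpj : p j ≠ 0 := ne_of_lt h
        have hfy0 : α < f y0 := hfK y0 hy0
        set t : ℝ := (α - f y0) / p j with ht
        have htpos : (0:ℝ) < t := div_pos_of_neg_of_neg (by linarith) h
        have hmem : y0 + t • (Pi.single j (1:ℝ) : Fin m → ℝ) ∈ K := by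
          have hle : y0 ≤ y0 + t • (Pi.single j (1:ℝ) : Fin m → ℝ) := by
            intro k
            simp only [Pi.add_apply, Pi.smul_apply, smul_eq_mul, Pi.single_apply]
            have : (0:ℝ) ≤ t * (if k = j then (1:ℝ) else 0) := by
              split <;> simp [htpos.le]
            linarith
          exact ⟨le_trans hy0.1 hle, le_trans hy0.2 (hmono _ _ hy0.1 hle)⟩
        have hlt := hfK _ hmem
        rw [map_add, map_smul, smul_eq_mul] at hlt
        have hcan : t * f (Pi.single j 1) = α - f y0 := by
          rw [ht]
          exact div_mul_cancel₀ _ hpj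
        rw [hcan] at hlt
        linarith
      -- f x ≥ 0, so α > 0
      have hfxnn : 0 ≤ f x := by
        rw [clm_eq_sum]
        exact Finset.sum_nonneg fun j _ => mul_nonneg (hx j) (hpnn j)
      have hα : 0 < α := lt_of_le_of_lt hfxnn hfx
      -- the price vector
      set q : Fin m → ℝ := fun j => (B / α) * p j with hq
      have hqnn : (0:Fin m → ℝ) ≤ q := fun j =>
        mul_nonneg (div_nonneg hB.le hα.le) (hpnn j)
      have hqy : ∀ y : Fin m → ℝ, ∑ j, q j * y j = (B / α) * f y := by
        intro y
        rw [clm_eq_sum f y, Finset.mul_sum]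
        exact Finset.sum_congr rfl fun j _ => by rw [hq]; ring
      have hqx : ∑ j, x j * q j ≤ B := by
        have : ∑ j, x j * q j = ∑ j, q j * x j :=
          Finset.sum_congr rfl fun j _ => mul_comm _ _
        rw [this, hqy]
        calc (B / α) * f x ≤ (B / α) * α :=
              mul_le_mul_of_nonneg_left hfx.le (div_nonneg hB.le hα.le)
          _ = B := by field_simp
      have hvq : v q B ≤ c + ε := by
        refine (hv q B hqnn hB).2 ?_
        rintro t ⟨y, hy, hyb, rfl⟩
        by_contra h
        push_neg at h
        have hyK : y ∈ K := ⟨hy, h.le⟩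
        have := hfK y hyK
        have hgt : B < ∑ j, q j * y j := by
          rw [hqy]
          calc B = (B / α) * α := by field_simp
            _ < (B / α) * f y := by
                apply mul_lt_mul_of_pos_left this (div_pos hB hα)
        linarith
      exact le_trans (hb ⟨q, hqnn, hqx, rfl⟩) hvq
end

section
/- Let u satisfy the standing assumptions (continuous, non-decreasing, locally nonsatiated, quasi-concave) and v be its indirect utility. Fix B > 0, an allocation x ∈ ℝ^m_{≥0}, and a price vector p ∈ ℝ^m_{≥0} with ⟨p, x⟩ ≤ B. Then x maximizes u over the budget set {y ≥ 0 : ⟨p, y⟩ ≤ B} if and only if p minimizes q ↦ v(q, B) over the set {q ≥ 0 : ⟨x, q⟩ ≤ B}. -/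
/-!
If `x` maximizes `u` on the `p`-budget set, then `v p B ≤ u x ≤ v q B` for every price `q`
that makes `x` affordable. Conversely, if some affordable `y₀` beats `x`, pick a level `c`
strictly between `u x` and `u y₀`. The upper contour set `{u ≥ c}` is closed, convex and an
upper set, so a hyperplane strictly separating it from `x` has a nonnegative normal; rescaled,
that normal is a price `q` at which `x` is affordable but no allocation of utility `≥ c` is,
whence `v q B ≤ c < u y₀ ≤ v p B`.
-/

open Matrix

section Separation

variable {ι : Type*} [Fintype ι]

theorem IsUpperSet.map_nonneg_of_forall_lt {E : Type*} [AddCommGroup E] [PartialOrder E]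
    [IsOrderedAddMonoid E] [Module ℝ E] [PosSMulMono ℝ E] {S : Set E} (hS : IsUpperSet S)
    (hne : S.Nonempty) (f : E →ₗ[ℝ] ℝ) {s : ℝ} (hf : ∀ y ∈ S, s < f y) {d : E} (hd : 0 ≤ d) :
    0 ≤ f d := by
  obtain ⟨y, hy⟩ := hne
  by_contra! hneg
  -- moving from `y` far enough in the direction `d` pushes `f` down to `s`
  set t := (f y - s) / -f d
  have ht : 0 ≤ t := div_nonneg (by linarith [hf y hy]) (by linarith)
  have hslope : t * f d = s - f y := by
    simp only [t, div_neg, neg_mul, div_mul_cancel₀ _ hneg.ne]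
    ring
  have := hf _ (hS (le_add_of_nonneg_right (smul_nonneg ht hd)) hy)
  rw [map_add, map_smul, smul_eq_mul, hslope] at this
  linarith

theorem exists_nonneg_dotProduct_separation {S : Set (ι → ℝ)} (hconv : Convex ℝ S)
    (hclosed : IsClosed S) (hupper : IsUpperSet S) (hne : S.Nonempty) {x : ι → ℝ} (hx : x ∉ S) :
    ∃ a : ι → ℝ, 0 ≤ a ∧ ∃ s : ℝ, a ⬝ᵥ x < s ∧ ∀ y ∈ S, s < a ⬝ᵥ y := by
  classical
  obtain ⟨f, s, hfx, hfS⟩ := geometric_hahn_banach_point_closed hconv hclosed hx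
  set a := (dotProductEquiv ℝ ι).symm f.toLinearMap
  have hfa (y : ι → ℝ) : f y = a ⬝ᵥ y := by
    rw [← dotProductEquiv_apply_apply ℝ, LinearEquiv.apply_symm_apply]
    rfl
  refine ⟨a, fun j => ?_, s, hfa x ▸ hfx, fun y hy => hfa y ▸ hfS y hy⟩
  simpa [a] using hupper.map_nonneg_of_forall_lt hne f.toLinearMap hfS
    (Pi.single_nonneg.mpr zero_le_one : 0 ≤ Pi.single j (1 : ℝ))

theorem exists_price_separation {S : Set (ι → ℝ)} (hconv : Convex ℝ S) (hclosed : IsClosed S)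
    (hupper : IsUpperSet S) (hne : S.Nonempty) {x : ι → ℝ} (hx : 0 ≤ x) (hxS : x ∉ S) {B : ℝ}
    (hB : 0 < B) : ∃ q : ι → ℝ, 0 ≤ q ∧ x ⬝ᵥ q ≤ B ∧ ∀ y ∈ S, B < q ⬝ᵥ y := by
  obtain ⟨a, ha, s, hax, haS⟩ :=
    exists_nonneg_dotProduct_separation hconv hclosed hupper hne hxS
  have hs : 0 < s := (dotProduct_nonneg_of_nonneg ha hx).trans_lt hax
  have hBs : 0 < B / s := div_pos hB hs
  have hBs_mul : B / s * s = B := div_mul_cancel₀ B hs.ne'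
  refine ⟨(B / s) • a, smul_nonneg hBs.le ha, ?_, fun y hy => ?_⟩
  · calc x ⬝ᵥ (B / s) • a = B / s * a ⬝ᵥ x := by rw [dotProduct_smul, dotProduct_comm, smul_eq_mul]
      _ ≤ B / s * s := mul_le_mul_of_nonneg_left hax.le hBs.le
      _ = B := hBs_mul
  · calc B = B / s * s := hBs_mul.symm
      _ < B / s * a ⬝ᵥ y := mul_lt_mul_of_pos_left (haS y hy) hBs
      _ = (B / s) • a ⬝ᵥ y := by rw [smul_dotProduct, smul_eq_mul]

theorem exists_price_forall_lt_of_lt {u : (ι → ℝ) → ℝ} {c B : ℝ}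
    (hcont : ContinuousOn u {y | 0 ≤ y}) (hmono : ∀ x y, 0 ≤ y → y ≤ x → u y ≤ u x)
    (hqc : Convex ℝ {y | 0 ≤ y ∧ c ≤ u y}) {x y₀ : ι → ℝ} (hx : 0 ≤ x) (hxc : u x < c)
    (hy₀ : 0 ≤ y₀) (hcy₀ : c ≤ u y₀) (hB : 0 < B) :
    ∃ q : ι → ℝ, 0 ≤ q ∧ x ⬝ᵥ q ≤ B ∧ ∀ y, 0 ≤ y → q ⬝ᵥ y ≤ B → u y < c := by
  have hclosed : IsClosed {y | 0 ≤ y ∧ c ≤ u y} :=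
    hcont.preimage_isClosed_of_isClosed isClosed_Ici isClosed_Ici
  have hupper : IsUpperSet {y | 0 ≤ y ∧ c ≤ u y} := fun a b hab ha =>
    ⟨ha.1.trans hab, ha.2.trans (hmono b a ha.1 hab)⟩
  obtain ⟨q, hq, hxq, hS⟩ :=
    exists_price_separation hqc hclosed hupper ⟨y₀, hy₀, hcy₀⟩ hx (fun h => hxc.not_ge h.2) hB
  refine ⟨q, hq, hxq, fun y hy hqy => ?_⟩
  by_contra! hcy
  exact (hS y ⟨hy, hcy⟩).not_ge hqy

end Separation

theorem stmt1_general {m : ℕ} (u : (Fin m → ℝ) → ℝ)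
    (hcont : ContinuousOn u {x : Fin m → ℝ | 0 ≤ x})
    (hmono : ∀ x y : Fin m → ℝ, 0 ≤ y → y ≤ x → u y ≤ u x)
    (hqc : ∀ α : ℝ, Convex ℝ {x : Fin m → ℝ | 0 ≤ x ∧ α ≤ u x})
    (v : (Fin m → ℝ) → ℝ → ℝ)
    (hv : ∀ p : Fin m → ℝ, ∀ B : ℝ, 0 ≤ p → 0 < B →
      IsLUB {t : ℝ | ∃ y : Fin m → ℝ, 0 ≤ y ∧ ∑ j, p j * y j ≤ B ∧ u y = t} (v p B))
    (B : ℝ) (hB : 0 < B) (x : Fin m → ℝ) (hx : 0 ≤ x)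
    (p : Fin m → ℝ) (hp : 0 ≤ p) :
    (∀ y : Fin m → ℝ, 0 ≤ y → ∑ j, p j * y j ≤ B → u y ≤ u x) ↔
    (∀ q : Fin m → ℝ, 0 ≤ q → ∑ j, x j * q j ≤ B → v p B ≤ v q B) := by
  constructor
  · intro hmax q hq hxq
    calc v p B ≤ u x := (hv p B hp hB).2 (by rintro _ ⟨y, hy, hpy, rfl⟩; exact hmax y hy hpy)
      _ ≤ v q B := (hv q B hq hB).1 ⟨x, hx, (dotProduct_comm q x).trans_le hxq, rfl⟩
  · intro hmin y₀ hy₀ hpy₀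
    by_contra! hlt
    obtain ⟨c, hxc, hcy₀⟩ := exists_between hlt
    obtain ⟨q, hq, hxq, hcheap⟩ :=
      exists_price_forall_lt_of_lt hcont hmono (hqc c) hx hxc hy₀ hcy₀.le hB
    have hvq : v q B ≤ c :=
      (hv q B hq hB).2 (by rintro _ ⟨y, hy, hqy, rfl⟩; exact (hcheap y hy hqy).le)
    have hvp : u y₀ ≤ v p B := (hv p B hp hB).1 ⟨y₀, hy₀, hpy₀, rfl⟩
    linarith [hmin q hq hxq]

theorem stmt1 {m : ℕ} (u : (Fin m → ℝ) → ℝ)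
    (hnn : ∀ x : Fin m → ℝ, 0 ≤ x → 0 ≤ u x)
    (hcont : ContinuousOn u {x : Fin m → ℝ | 0 ≤ x})
    (hmono : ∀ x y : Fin m → ℝ, 0 ≤ y → y ≤ x → u y ≤ u x)
    (hlns : ∀ x : Fin m → ℝ, 0 ≤ x → ∀ ε : ℝ, 0 < ε →
      ∃ y : Fin m → ℝ, 0 ≤ y ∧ ‖x - y‖ ≤ ε ∧ u x < u y)
    (hqc : ∀ α : ℝ, Convex ℝ {x : Fin m → ℝ | 0 ≤ x ∧ α ≤ u x})
    (v : (Fin m → ℝ) → ℝ → ℝ)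
    (hv : ∀ p : Fin m → ℝ, ∀ B : ℝ, 0 ≤ p → 0 < B →
      IsLUB {t : ℝ | ∃ y : Fin m → ℝ, 0 ≤ y ∧ ∑ j, p j * y j ≤ B ∧ u y = t} (v p B))
    (B : ℝ) (hB : 0 < B) (x : Fin m → ℝ) (hx : 0 ≤ x)
    (p : Fin m → ℝ) (hp : 0 ≤ p) (hpx : ∑ j, p j * x j ≤ B) :
    (∀ y : Fin m → ℝ, 0 ≤ y → ∑ j, p j * y j ≤ B → u y ≤ u x) ↔
    (∀ q : Fin m → ℝ, 0 ≤ q → ∑ j, x j * q j ≤ B → v p B ≤ v q B) :=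
  stmt1_general u hcont hmono hqc v hv B hB x hx p hp
end

section
/- If a function f: ℝ^m_{≥0} → ℝ_{≥0} is quasi-concave, non-decreasing, and positively 1-homogeneous (f(cx) = c·f(x) for all c > 0), then f is concave. -/
/-! A positively homogeneous function is concave as soon as it is superadditive. Superadditivity
comes from quasi-concavity: if `f x, f y > 0`, the normalized points `x / f x` and `y / f y` lie in
the superlevel set `{f ≥ 1}`, and `x + y` is `f x + f y` times a convex combination of them. If, say,
`f x = 0`, monotonicity alone gives `f y ≤ f (x + y)`. -/

open Set

section Cone

variable {E : Type*} [AddCommGroup E] [Module ℝ E] {s : Set E} {f : E → ℝ}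

theorem QuasiconcaveOn.add_le_map_add_of_homogeneous (hf : QuasiconcaveOn ℝ s f)
    (hsmul : ∀ c : ℝ, 0 < c → ∀ x ∈ s, c • x ∈ s)
    (hhom : ∀ c : ℝ, 0 < c → ∀ x ∈ s, f (c • x) = c * f x)
    {x y : E} (hx : x ∈ s) (hy : y ∈ s) (hfx : 0 < f x) (hfy : 0 < f y) :
    f x + f y ≤ f (x + y) := by
  set S := f x + f y
  have hS : 0 < S := add_pos hfx hfy
  have hnormalize {w : E} (hw : w ∈ s) (hfw : 0 < f w) :
      (f w)⁻¹ • w ∈ {z ∈ s | 1 ≤ f z} := by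
    refine ⟨hsmul _ (inv_pos.mpr hfw) w hw, ?_⟩
    rw [hhom _ (inv_pos.mpr hfw) w hw, inv_mul_cancel₀ hfw.ne']
  have hz := hf 1 (hnormalize hx hfx) (hnormalize hy hfy)
    (div_nonneg hfx.le hS.le) (div_nonneg hfy.le hS.le) (by rw [← add_div, div_self hS.ne'])
  set z := (f x / S) • (f x)⁻¹ • x + (f y / S) • (f y)⁻¹ • y
  have hxy : x + y = S • z := by
    have hcoef {t : ℝ} (ht : t ≠ 0) : S * (t / S * t⁻¹) = 1 := by field_simp
    simp only [z, smul_add, smul_smul, hcoef hfx.ne', hcoef hfy.ne', one_smul]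
  calc f x + f y = S * 1 := (mul_one S).symm
    _ ≤ S * f z := mul_le_mul_of_nonneg_left hz.2 hS.le
    _ = f (x + y) := by rw [hxy, hhom S hS z hz.1]

theorem concaveOn_of_le_map_add_of_homogeneous (hs : Convex ℝ s)
    (hsmul : ∀ c : ℝ, 0 < c → ∀ x ∈ s, c • x ∈ s)
    (hadd : ∀ x ∈ s, ∀ y ∈ s, f x + f y ≤ f (x + y))
    (hhom : ∀ c : ℝ, 0 < c → ∀ x ∈ s, f (c • x) = c * f x) :
    ConcaveOn ℝ s f := by
  refine concaveOn_iff_forall_pos.mpr ⟨hs, fun x hx y hy a b ha hb _ => ?_⟩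
  calc a • f x + b • f y = f (a • x) + f (b • y) := by rw [hhom a ha x hx, hhom b hb y hy]; rfl
    _ ≤ f (a • x + b • y) := hadd _ (hsmul a ha x hx) _ (hsmul b hb y hy)

end Cone

section Ordered

variable {E : Type*} [AddCommGroup E] [PartialOrder E] [IsOrderedAddMonoid E] [Module ℝ E]
  [PosSMulMono ℝ E] {f : E → ℝ}

theorem QuasiconcaveOn.add_le_map_add_of_monotoneOn (hf : QuasiconcaveOn ℝ (Ici 0) f)
    (hnn : ∀ x, 0 ≤ x → 0 ≤ f x) (hmono : MonotoneOn f (Ici 0))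
    (hhom : ∀ c : ℝ, 0 < c → ∀ x, 0 ≤ x → f (c • x) = c * f x)
    {x y : E} (hx : 0 ≤ x) (hy : 0 ≤ y) :
    f x + f y ≤ f (x + y) := by
  have hxy : 0 ≤ x + y := add_nonneg hx hy
  rcases (hnn x hx).eq_or_lt with hfx | hfx
  · rw [← hfx, zero_add]
    exact hmono hy hxy (le_add_of_nonneg_left hx)
  rcases (hnn y hy).eq_or_lt with hfy | hfy
  · rw [← hfy, add_zero]
    exact hmono hx hxy (le_add_of_nonneg_right hy)
  exact hf.add_le_map_add_of_homogeneous (fun c hc x hx => smul_nonneg hc.le hx) hhom hx hy hfx hfy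

end Ordered

theorem stmt2 {m : ℕ} (f : (Fin m → ℝ) → ℝ)
    (hnn : ∀ x : Fin m → ℝ, 0 ≤ x → 0 ≤ f x)
    (hqc : ∀ α : ℝ, Convex ℝ {x : Fin m → ℝ | 0 ≤ x ∧ α ≤ f x})
    (hmono : ∀ x y : Fin m → ℝ, 0 ≤ y → y ≤ x → f y ≤ f x)
    (hhom : ∀ c : ℝ, 0 < c → ∀ x : Fin m → ℝ, 0 ≤ x → f (c • x) = c * f x) :
    ConcaveOn ℝ {x : Fin m → ℝ | 0 ≤ x} f := by
  have hmono' : MonotoneOn f (Ici 0) := fun y hy x _ hyx => hmono x y hy hyx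
  have hadd : ∀ x ∈ Ici (0 : Fin m → ℝ), ∀ y ∈ Ici 0, f x + f y ≤ f (x + y) :=
    fun x hx y hy => QuasiconcaveOn.add_le_map_add_of_monotoneOn hqc hnn hmono' hhom hx hy
  exact concaveOn_of_le_map_add_of_homogeneous (s := Ici 0) (convex_Ici 0)
    (fun c hc x hx => mem_Ici.mpr (smul_nonneg hc.le hx)) hadd hhom
end

section
/- Let u: ℝ^m_{≥0} → ℝ_{≥0} be continuous, monotone (x ≫ y implies u(x) > u(y)), concave, and 1-homogeneous with u not identically zero, and fix B > 0. Define the dual utility ũ(x) = 1 / v(x, B), where v is the indirect utility of u (with ũ(x) = 0 when v(x, B) = +∞). Then ũ is also continuous, monotone, concave, and 1-homogeneous. -/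
open scoped ENNReal Pointwise

/-- Auxiliary set: values `⟨p,z⟩ / (B * u z)` over feasible directions `z`. -/
def SSaux {m : ℕ} (u : (Fin m → ℝ) → ℝ) (B : ℝ) (p : Fin m → ℝ) : Set ℝ :=
  (fun z => (∑ j, p j * z j) / (B * u z)) '' {z | 0 ≤ z ∧ 0 < u z}

/-- Candidate dual utility: infimum of the above set. -/
noncomputable def ggaux {m : ℕ} (u : (Fin m → ℝ) → ℝ) (B : ℝ) (p : Fin m → ℝ) : ℝ :=
  sInf (SSaux u B p)

lemma SSaux_nonneg {m : ℕ} {u : (Fin m → ℝ) → ℝ} {B : ℝ} (hB : 0 < B)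
    {p : Fin m → ℝ} (hp : 0 ≤ p) {t : ℝ} (ht : t ∈ SSaux u B p) : 0 ≤ t := by
  obtain ⟨z, ⟨hz, hu⟩, rfl⟩ := ht
  apply div_nonneg
  · exact Finset.sum_nonneg fun j _ => mul_nonneg (hp j) (hz j)
  · positivity

lemma SSaux_mem {m : ℕ} {u : (Fin m → ℝ) → ℝ} {B : ℝ} (p : Fin m → ℝ)
    {z : Fin m → ℝ} (hz : 0 ≤ z) (hu : 0 < u z) :
    (∑ j, p j * z j) / (B * u z) ∈ SSaux u B p :=
  ⟨z, ⟨hz, hu⟩, rfl⟩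

theorem stmt3 {m : ℕ} (u : (Fin m → ℝ) → ℝ) (B : ℝ) (hB : 0 < B)
    (hnn : ∀ x : Fin m → ℝ, 0 ≤ x → 0 ≤ u x)
    (hcont : ContinuousOn u {x : Fin m → ℝ | 0 ≤ x})
    (hmono : ∀ x y : Fin m → ℝ, 0 ≤ y → (∀ j, y j < x j) → u y < u x)
    (hconc : ConcaveOn ℝ {x : Fin m → ℝ | 0 ≤ x} u)
    (hhom : ∀ c : ℝ, 0 < c → ∀ x : Fin m → ℝ, 0 ≤ x → u (c • x) = c * u x)
    (hnz : ∃ x : Fin m → ℝ, 0 ≤ x ∧ u x ≠ 0)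
    (v : (Fin m → ℝ) → ℝ≥0∞)
    (hv : ∀ p : Fin m → ℝ,
      v p = ⨆ (x : Fin m → ℝ) (_ : 0 ≤ x) (_ : ∑ j, p j * x j ≤ B), ENNReal.ofReal (u x))
    (ud : (Fin m → ℝ) → ℝ)
    (hud : ∀ x : Fin m → ℝ, ud x = ((v x)⁻¹).toReal) :
    ContinuousOn ud {x : Fin m → ℝ | 0 ≤ x} ∧
    (∀ x y : Fin m → ℝ, 0 ≤ y → (∀ j, y j < x j) → ud y < ud x) ∧
    ConcaveOn ℝ {x : Fin m → ℝ | 0 ≤ x} ud ∧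
    (∀ c : ℝ, 0 < c → ∀ x : Fin m → ℝ, 0 ≤ x → ud (c • x) = c * ud x) := by
  -- dispose of the degenerate case m = 0
  rcases Nat.eq_zero_or_pos m with hm | hm
  · subst hm
    exact absurd (hmono 0 0 le_rfl (fun j => j.elim0)) (lt_irrefl _)
  have hmne : Nonempty (Fin m) := ⟨⟨0, hm⟩⟩
  -- basic facts
  have h0 : u 0 = 0 := by
    have h2 := hhom 2 (by norm_num) 0 le_rfl
    rw [smul_zero] at h2; linarith
  obtain ⟨x₀, hx₀nn, hx₀ne⟩ := hnz
  have hx₀pos : 0 < u x₀ := lt_of_le_of_ne (hnn x₀ hx₀nn) (Ne.symm hx₀ne)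
  have hSne : ∀ p : Fin m → ℝ, (SSaux u B p).Nonempty :=
    fun p => ⟨_, SSaux_mem p hx₀nn hx₀pos⟩
  have hSbdd : ∀ p : Fin m → ℝ, 0 ≤ p → BddBelow (SSaux u B p) :=
    fun p hp => ⟨0, fun t ht => SSaux_nonneg hB hp ht⟩
  have hg_nn : ∀ p : Fin m → ℝ, 0 ≤ p → 0 ≤ ggaux u B p :=
    fun p hp => le_csInf (hSne p) (fun t ht => SSaux_nonneg hB hp ht)
  have hsum_pos : ∀ z : Fin m → ℝ, 0 ≤ z → 0 < u z → 0 < ∑ j, z j := by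
    intro z hz hu
    rcases (Finset.sum_nonneg fun j _ => hz j).lt_or_eq with h | h
    · exact h
    · exfalso
      have hz0 : z = 0 := by
        funext j
        exact (Finset.sum_eq_zero_iff_of_nonneg (fun j _ => hz j)).mp h.symm j
          (Finset.mem_univ j)
      rw [hz0, h0] at hu; exact lt_irrefl _ hu
  have hone : 0 < u 1 := by
    have := hmono 1 0 le_rfl (fun j => one_pos)
    rwa [h0] at this
  -- upper bound u z ≤ 2 * u 1 * ∑ z
  have hub : ∀ z : Fin m → ℝ, 0 ≤ z → 0 < u z → u z ≤ 2 * u 1 * ∑ j, z j := by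
    intro z hz hu
    have hs := hsum_pos z hz hu
    have hlt : ∀ j, z j < (2 * ∑ j, z j) * (1 : Fin m → ℝ) j := by
      intro j
      have h1 : z j ≤ ∑ i, z i :=
        Finset.single_le_sum (fun i _ => hz i) (Finset.mem_univ j)
      simp only [Pi.one_apply, mul_one]
      linarith
    have := hmono ((2 * ∑ j, z j) • (1 : Fin m → ℝ)) z hz (by
      intro j
      simpa using hlt j)
    rw [hhom (2 * ∑ j, z j) (by linarith) 1 (fun j => zero_le_one)] at this
    linarith
  -- weak monotonicity of ggaux
  have hg_mono : ∀ p q : Fin m → ℝ, 0 ≤ p → p ≤ q → ggaux u B p ≤ ggaux u B q := by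
    intro p q hp hpq
    apply le_csInf (hSne q)
    rintro t ⟨z, ⟨hz, hu⟩, rfl⟩
    calc ggaux u B p ≤ (∑ j, p j * z j) / (B * u z) := csInf_le (hSbdd p hp) (SSaux_mem p hz hu)
      _ ≤ (∑ j, q j * z j) / (B * u z) := by
          have hnum : ∑ j, p j * z j ≤ ∑ j, q j * z j :=
            Finset.sum_le_sum fun j _ => mul_le_mul_of_nonneg_right (hpq j) (hz j)
          exact div_le_div_of_nonneg_right hnum (by positivity)
  -- homogeneity of ggaux
  have hg_hom : ∀ c : ℝ, 0 < c → ∀ p : Fin m → ℝ, ggaux u B (c • p) = c * ggaux u B p := by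
    intro c hc p
    have hdot : ∀ z : Fin m → ℝ, ∑ j, (c • p) j * z j = c * ∑ j, p j * z j := by
      intro z
      rw [Finset.mul_sum]
      exact Finset.sum_congr rfl fun j _ => by simp [mul_assoc]
    have hset : SSaux u B (c • p) = c • SSaux u B p := by
      ext t
      constructor
      · rintro ⟨z, hzmem, rfl⟩
        exact ⟨(∑ j, p j * z j) / (B * u z), ⟨z, hzmem, rfl⟩, by
          simp only [smul_eq_mul]; rw [← mul_div_assoc, ← hdot]⟩
      · rintro ⟨t', ⟨z, hzmem, rfl⟩, rfl⟩
        exact ⟨z, hzmem, by simp only [smul_eq_mul]; rw [← mul_div_assoc, ← hdot]⟩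
    rw [ggaux, hset, Real.sInf_smul_of_nonneg hc.le, smul_eq_mul, ggaux]
  -- helper: any feasible bundle gives a lower bound for v
  have hle_v : ∀ p x : Fin m → ℝ, 0 ≤ x → (∑ j, p j * x j) ≤ B →
      ENNReal.ofReal (u x) ≤ v p := by
    intro p x hx hbx
    rw [hv]
    exact le_iSup_of_le x (le_iSup_of_le hx (le_iSup_of_le hbx le_rfl))
  -- if some valuable bundle is free then v = ⊤
  have htop : ∀ p : Fin m → ℝ, ∀ z : Fin m → ℝ, 0 ≤ z → 0 < u z →
      (∑ j, p j * z j) = 0 → v p = ⊤ := by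
    intro p z hz hu hdz
    apply eq_top_iff.2
    apply le_of_forall_lt
    intro c hc
    have hcne : c ≠ ⊤ := hc.ne
    have hcoef : 0 < (c.toReal + 1) / u z := by positivity
    have hxnn : 0 ≤ ((c.toReal + 1) / u z) • z := fun j => mul_nonneg hcoef.le (hz j)
    have hdotx : ∑ j, p j * (((c.toReal + 1) / u z) • z) j = 0 := by
      rw [show ∑ j, p j * (((c.toReal + 1) / u z) • z) j
          = ((c.toReal + 1) / u z) * ∑ j, p j * z j from by
        rw [Finset.mul_sum]; exact Finset.sum_congr rfl fun j _ => by simp; ring, hdz, mul_zero]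
    have hux : u (((c.toReal + 1) / u z) • z) = c.toReal + 1 := by
      rw [hhom _ hcoef z hz, div_mul_cancel₀ _ hu.ne']
    have h1 : ENNReal.ofReal (c.toReal + 1) ≤ v p := by
      rw [← hux]; exact hle_v p _ hxnn (by rw [hdotx]; exact hB.le)
    refine lt_of_lt_of_le ?_ h1
    conv_lhs => rw [← ENNReal.ofReal_toReal hcne]
    exact ENNReal.ofReal_lt_ofReal_iff (by positivity) |>.2 (by linarith [ENNReal.toReal_nonneg (a := c)])
  -- the bridge: (v p)⁻¹ = ofReal (ggaux p)
  have hbridge : ∀ p : Fin m → ℝ, 0 ≤ p → (v p)⁻¹ = ENNReal.ofReal (ggaux u B p) := by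
    intro p hp
    have hd1 : (v p)⁻¹ ≤ ENNReal.ofReal (ggaux u B p) := by
      have key : ∀ t ∈ SSaux u B p, (v p)⁻¹ ≤ ENNReal.ofReal t := by
        rintro t ⟨z, ⟨hz, hu⟩, rfl⟩
        have hdnn : 0 ≤ ∑ j, p j * z j :=
          Finset.sum_nonneg fun j _ => mul_nonneg (hp j) (hz j)
        rcases hdnn.lt_or_eq with hdz | hdz
        · -- positive price of z
          set d := ∑ j, p j * z j with hd
          have hxle : ENNReal.ofReal (B * u z / d) ≤ v p := by
            have hcoef : 0 < B / d := div_pos hB hdz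
            have hxnn : 0 ≤ (B / d) • z := fun j => mul_nonneg hcoef.le (hz j)
            have hdotx : ∑ j, p j * ((B / d) • z) j = B := by
              rw [show ∑ j, p j * ((B / d) • z) j = (B / d) * ∑ j, p j * z j from by
                rw [Finset.mul_sum]; exact Finset.sum_congr rfl fun j _ => by simp; ring]
              exact div_mul_cancel₀ B hdz.ne'
            have hux : u ((B / d) • z) = B * u z / d := by
              rw [hhom _ hcoef z hz]; ring
            rw [← hux]
            exact hle_v p _ hxnn (le_of_eq hdotx)
          calc (v p)⁻¹ ≤ (ENNReal.ofReal (B * u z / d))⁻¹ := ENNReal.inv_le_inv.2 hxle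
            _ = ENNReal.ofReal ((B * u z / d)⁻¹) :=
                (ENNReal.ofReal_inv_of_pos (div_pos (mul_pos hB hu) hdz)).symm
            _ = ENNReal.ofReal (d / (B * u z)) := by rw [inv_div]
        · rw [htop p z hz hu hdz.symm]
          simp
      have himg : ENNReal.ofReal (sInf (SSaux u B p)) = sInf (ENNReal.ofReal '' SSaux u B p) :=
        Monotone.map_csInf_of_continuousAt (ENNReal.continuous_ofReal.continuousAt)
          (fun a b h => ENNReal.ofReal_le_ofReal h) (hSne p) (hSbdd p hp)
      rw [ggaux, himg]
      exact le_sInf (by rintro b ⟨t, ht, rfl⟩; exact key t ht)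
    have hd2 : ENNReal.ofReal (ggaux u B p) ≤ (v p)⁻¹ := by
      rcases (hg_nn p hp).lt_or_eq with hgpos | hg0
      · rw [← inv_inv (ENNReal.ofReal (ggaux u B p))]
        apply ENNReal.inv_le_inv.2
        rw [← ENNReal.ofReal_inv_of_pos hgpos, hv]
        apply iSup_le; intro x; apply iSup_le; intro hx; apply iSup_le; intro hbx
        apply ENNReal.ofReal_le_ofReal
        rcases le_or_gt (u x) 0 with hux | hux
        · exact hux.trans (by positivity)
        · have hmem : ggaux u B p ≤ (∑ j, p j * x j) / (B * u x) :=
            csInf_le (hSbdd p hp) (SSaux_mem p hx hux)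
          have h1 : ggaux u B p * (B * u x) ≤ ∑ j, p j * x j :=
            (le_div_iff₀ (by positivity)).1 hmem
          have h2 : ggaux u B p * (B * u x) ≤ B := h1.trans hbx
          rw [inv_eq_one_div, le_div_iff₀ hgpos]
          nlinarith
      · rw [← hg0]
        simp
    exact le_antisymm hd1 hd2
  have hud_eq : ∀ p : Fin m → ℝ, 0 ≤ p → ud p = ggaux u B p := by
    intro p hp
    rw [hud, hbridge p hp, ENNReal.toReal_ofReal (hg_nn p hp)]
  -- the four conclusions
  refine ⟨?_, ?_, ?_, ?_⟩
  · -- continuity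
    have hgcont : ContinuousOn (ggaux u B) {x : Fin m → ℝ | 0 ≤ x} := by
      intro p₀ hp₀
      have hp₀' : 0 ≤ p₀ := hp₀
      apply tendsto_order.2
      constructor
      · -- lower semicontinuity within the orthant
        intro b hb
        set g₀ := ggaux u B p₀ with hg₀def
        have hg₀ : 0 ≤ g₀ := hg_nn p₀ hp₀'
        obtain ⟨θ, hθ0, hθ1, hθb⟩ : ∃ θ : ℝ, 0 < θ ∧ θ < 1 ∧ b < (1 - θ) * g₀ := by
          refine ⟨min (1/2) ((g₀ - b)/(2*(g₀+1))), ?_, ?_, ?_⟩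
          · exact lt_min (by norm_num) (div_pos (by linarith) (by linarith))
          · exact lt_of_le_of_lt (min_le_left _ _) (by norm_num)
          · have hm1 : min (1/2) ((g₀ - b)/(2*(g₀+1))) ≤ (g₀ - b)/(2*(g₀+1)) :=
              min_le_right _ _
            have hm2 : min (1/2) ((g₀ - b)/(2*(g₀+1))) * g₀ ≤ ((g₀ - b)/(2*(g₀+1))) * g₀ :=
              mul_le_mul_of_nonneg_right hm1 hg₀
            have hm3 : ((g₀ - b)/(2*(g₀+1))) * g₀ < g₀ - b := by
              rw [div_mul_eq_mul_div, div_lt_iff₀ (by linarith)]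
              nlinarith
            nlinarith
        rw [eventually_nhdsWithin_iff]
        have hUopen : IsOpen {p : Fin m → ℝ | ∀ j, 0 < p₀ j → (1-θ) * p₀ j < p j} := by
          have hU : {p : Fin m → ℝ | ∀ j, 0 < p₀ j → (1-θ) * p₀ j < p j} =
              ⋂ j, {p : Fin m → ℝ | 0 < p₀ j → (1-θ) * p₀ j < p j} := by
            ext p; simp [Set.mem_iInter]
          rw [hU]
          apply isOpen_iInter_of_finite
          intro j
          by_cases hj : 0 < p₀ j
          · have : {p : Fin m → ℝ | 0 < p₀ j → (1-θ) * p₀ j < p j}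
                = {p : Fin m → ℝ | (1-θ) * p₀ j < p j} := by ext p; simp [hj]
            rw [this]
            exact isOpen_lt continuous_const (continuous_apply j)
          · have : {p : Fin m → ℝ | 0 < p₀ j → (1-θ) * p₀ j < p j} = Set.univ := by
              ext p; simp [hj]
            rw [this]; exact isOpen_univ
        have hp₀U : p₀ ∈ {p : Fin m → ℝ | ∀ j, 0 < p₀ j → (1-θ) * p₀ j < p j} := by
          intro j hj; nlinarith
        filter_upwards [hUopen.mem_nhds hp₀U] with p hpU hps
        have hle : (1-θ) • p₀ ≤ p := by
          intro j
          rcases lt_or_ge 0 (p₀ j) with hj | hj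
          · exact (hpU j hj).le
          · have hz0 : p₀ j = 0 := le_antisymm hj (hp₀' j)
            have : ((1-θ) • p₀) j = 0 := by
              simp [hz0]
            rw [this]; exact hps j
        have h1 : ggaux u B ((1-θ) • p₀) ≤ ggaux u B p :=
          hg_mono _ _ (fun j => mul_nonneg (by linarith) (hp₀' j)) hle
        rw [hg_hom (1-θ) (by linarith) p₀] at h1
        linarith
      · -- upper semicontinuity
        intro b hb
        have hb' : sInf (SSaux u B p₀) < b := hb
        obtain ⟨t, ⟨z, ⟨hz, hu⟩, rfl⟩, htb⟩ :=
          (csInf_lt_iff (hSbdd p₀ hp₀') (hSne p₀)).1 hb'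
        have hfcont : Continuous (fun p : Fin m → ℝ => (∑ j, p j * z j)/(B * u z)) := by
          apply Continuous.div_const
          exact continuous_finset_sum _ fun j _ => (continuous_apply j).mul continuous_const
        have hopen : IsOpen {p : Fin m → ℝ | (∑ j, p j * z j)/(B * u z) < b} :=
          isOpen_lt hfcont continuous_const
        rw [eventually_nhdsWithin_iff]
        filter_upwards [hopen.mem_nhds htb] with p hpU hps
        exact lt_of_le_of_lt (csInf_le (hSbdd p hps) (SSaux_mem p hz hu)) hpU
    exact ContinuousOn.congr hgcont (fun x hx => hud_eq x hx)
  · -- strict monotonicity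
    intro x y hy hyx
    have hx : 0 ≤ x := fun j => (hy j).trans (hyx j).le
    rw [hud_eq x hx, hud_eq y hy]
    obtain ⟨j₀, -, hj₀⟩ := Finset.exists_min_image Finset.univ (fun j => x j - y j)
      ⟨⟨0, hm⟩, Finset.mem_univ _⟩
    set δ := x j₀ - y j₀ with hδdef
    have hδpos : 0 < δ := by have := hyx j₀; simp only [hδdef]; linarith
    have hδle : ∀ j, δ ≤ x j - y j := fun j => hj₀ j (Finset.mem_univ j)
    set M := 2 * u 1 with hMdef
    have hMpos : 0 < M := by simp only [hMdef]; linarith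
    have key : ggaux u B y + δ/(B*M) ≤ ggaux u B x := by
      apply le_csInf (hSne x)
      rintro t ⟨z, ⟨hz, hu⟩, rfl⟩
      have hs := hsum_pos z hz hu
      have hsplit : ∑ j, x j * z j = ∑ j, y j * z j + ∑ j, (x j - y j) * z j := by
        rw [← Finset.sum_add_distrib]
        exact Finset.sum_congr rfl fun j _ => by ring
      have h1 : ggaux u B y ≤ (∑ j, y j * z j)/(B * u z) :=
        csInf_le (hSbdd y hy) (SSaux_mem y hz hu)
      have h2 : δ * ∑ j, z j ≤ ∑ j, (x j - y j) * z j := by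
        rw [Finset.mul_sum]
        exact Finset.sum_le_sum fun j _ => mul_le_mul_of_nonneg_right (hδle j) (hz j)
      have h3 : δ/(B*M) ≤ (∑ j, (x j - y j) * z j)/(B * u z) := by
        have e : δ/(B*M) = (δ * ∑ j, z j)/((B*M) * ∑ j, z j) := by
          rw [mul_div_mul_right _ _ hs.ne']
        rw [e]
        refine div_le_div₀ ?_ h2 (by positivity) ?_
        · exact le_trans (mul_nonneg hδpos.le (Finset.sum_nonneg fun j _ => hz j)) h2
        · have := hub z hz hu
          nlinarith
      calc ggaux u B y + δ/(B*M)
          ≤ (∑ j, y j * z j)/(B*u z) + (∑ j, (x j - y j)*z j)/(B*u z) := add_le_add h1 h3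
        _ = (∑ j, x j * z j)/(B * u z) := by rw [hsplit, add_div]
    have : 0 < δ/(B*M) := div_pos hδpos (mul_pos hB hMpos)
    linarith
  · -- concavity
    constructor
    · exact convex_Ici (0 : Fin m → ℝ)
    · intro x hx y hy a b ha hb hab
      have hx' : (0:Fin m → ℝ) ≤ x := hx
      have hy' : (0:Fin m → ℝ) ≤ y := hy
      have hxy : 0 ≤ a • x + b • y := fun j =>
        add_nonneg (mul_nonneg ha (hx' j)) (mul_nonneg hb (hy' j))
      simp only [smul_eq_mul]
      rw [hud_eq x hx', hud_eq y hy', hud_eq _ hxy]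
      apply le_csInf (hSne _)
      rintro t ⟨z, ⟨hz, hu⟩, rfl⟩
      have hsplit : ∑ j, (a • x + b • y) j * z j
          = a * ∑ j, x j * z j + b * ∑ j, y j * z j := by
        rw [Finset.mul_sum, Finset.mul_sum, ← Finset.sum_add_distrib]
        refine Finset.sum_congr rfl fun j _ => ?_
        simp only [Pi.add_apply, Pi.smul_apply, smul_eq_mul]
        ring
      have h1 : ggaux u B x ≤ (∑ j, x j * z j)/(B*u z) :=
        csInf_le (hSbdd x hx') (SSaux_mem x hz hu)
      have h2 : ggaux u B y ≤ (∑ j, y j * z j)/(B*u z) :=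
        csInf_le (hSbdd y hy') (SSaux_mem y hz hu)
      calc a * ggaux u B x + b * ggaux u B y
          ≤ a * ((∑ j, x j * z j)/(B*u z)) + b * ((∑ j, y j * z j)/(B*u z)) :=
            add_le_add (mul_le_mul_of_nonneg_left h1 ha) (mul_le_mul_of_nonneg_left h2 hb)
        _ = (∑ j, (a • x + b • y) j * z j)/(B * u z) := by
            rw [hsplit, add_div, mul_div_assoc, mul_div_assoc]
  · -- homogeneity
    intro c hc x hx
    have hcx : 0 ≤ c • x := fun j => mul_nonneg hc.le (hx j)
    rw [hud_eq _ hcx, hud_eq x hx, hg_hom c hc x]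
end

section
/- For the CES utility u(x) = (Σ_j a_j x_j^ρ)^{1/ρ} with coefficients a_j > 0 and parameter ρ ∈ (0, 1), the indirect utility at price p ≫ 0 and budget B > 0 equals v(p, B) = B · (Σ_j a_j^{1−ρ̃} p_j^{ρ̃})^{−1/ρ̃}, where ρ̃ = ρ/(ρ−1). -/
/-!
Hölder's inequality with the conjugate exponents `1/(1-ρ)` and `1/ρ`, applied to `a_j p_j^(-ρ)` and
`(p_j x_j)^ρ`, gives `Σ a_j x_j^ρ ≤ S^(1-ρ) (Σ p_j x_j)^ρ` with `S = Σ a_j^(1-ρ̃) p_j^ρ̃`, so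
`v(p, B) ≤ B S^((1-ρ)/ρ) = B S^(-1/ρ̃)`. Equality holds for the demand `x_j ∝ a_j^(1-ρ̃) p_j^(ρ̃-1)`
scaled to exhaust the budget, because `ρ (ρ̃ - 1) = ρ̃`.
-/

open Finset Real

noncomputable section

variable {ι : Type*} [Fintype ι] {a p x : ι → ℝ} {ρ r B S : ℝ}

def cesPriceSum (a p : ι → ℝ) (r : ℝ) : ℝ := ∑ j, a j ^ (1 - r) * p j ^ r

-- For empty `ι` the price sum vanishes and `B / 0 = 0` makes this the zero bundle.
def cesDemand (a p : ι → ℝ) (r B : ℝ) (j : ι) : ℝ :=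
  B / cesPriceSum a p r * (a j ^ (1 - r) * p j ^ (r - 1))

lemma cesPriceSum_nonneg (ha : ∀ j, 0 ≤ a j) (hp : ∀ j, 0 ≤ p j) : 0 ≤ cesPriceSum a p r :=
  sum_nonneg fun j _ => mul_nonneg (rpow_nonneg (ha j) _) (rpow_nonneg (hp j) _)

lemma sum_mul_rpow_le_cesPriceSum (ha : ∀ j, 0 ≤ a j) (hp : ∀ j, 0 < p j) (hx : 0 ≤ x)
    (hρ₀ : 0 < ρ) (hρ₁ : ρ < 1) :
    ∑ j, a j * x j ^ ρ ≤ cesPriceSum a p (ρ / (ρ - 1)) ^ (1 - ρ) * (∑ j, p j * x j) ^ ρ := by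
  have hρ : ρ - 1 ≠ 0 := by linarith
  have hρ' : 1 - ρ ≠ 0 := by linarith
  have hexp : (1 - ρ)⁻¹ = 1 - ρ / (ρ - 1) := by field_simp; ring
  have hexp' : -ρ * (1 - ρ / (ρ - 1)) = ρ / (ρ - 1) := by field_simp; ring
  have hölder := inner_le_Lp_mul_Lq_of_nonneg univ (HolderConjugate.one_sub_inv_inv hρ₀ hρ₁)
    (f := fun j => a j * p j ^ (-ρ)) (g := fun j => (p j * x j) ^ ρ)
    (fun j _ => mul_nonneg (ha j) (rpow_nonneg (hp j).le _))
    (fun j _ => rpow_nonneg (mul_nonneg (hp j).le (hx j)) _)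
  calc ∑ j, a j * x j ^ ρ = ∑ j, a j * p j ^ (-ρ) * (p j * x j) ^ ρ := by
        refine sum_congr rfl fun j _ => ?_
        rw [mul_rpow (hp j).le (hx j), rpow_neg (hp j).le]
        field_simp [(rpow_pos_of_pos (hp j) ρ).ne']
    _ ≤ _ := hölder
    _ = cesPriceSum a p (ρ / (ρ - 1)) ^ (1 - ρ) * (∑ j, p j * x j) ^ ρ := by
        simp only [one_div, inv_inv, cesPriceSum]
        congr 2 <;> refine sum_congr rfl fun j _ => ?_
        · rw [mul_rpow (ha j) (rpow_nonneg (hp j).le _), ← rpow_mul (hp j).le, hexp, hexp']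
        · exact rpow_rpow_inv (mul_nonneg (hp j).le (hx j)) hρ₀.ne'

lemma cesDemand_nonneg (ha : ∀ j, 0 ≤ a j) (hp : ∀ j, 0 ≤ p j) (hB : 0 ≤ B) :
    0 ≤ cesDemand a p r B := fun j =>
  mul_nonneg (div_nonneg hB (cesPriceSum_nonneg ha hp))
    (mul_nonneg (rpow_nonneg (ha j) _) (rpow_nonneg (hp j) _))

lemma sum_mul_cesDemand_le (ha : ∀ j, 0 ≤ a j) (hp : ∀ j, 0 < p j) (hB : 0 ≤ B) :
    ∑ j, p j * cesDemand a p r B j ≤ B := by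
  have hspend : ∑ j, p j * cesDemand a p r B j = B / cesPriceSum a p r * cesPriceSum a p r := by
    nth_rw 2 [cesPriceSum]; rw [mul_sum]
    refine sum_congr rfl fun j _ => ?_
    rw [cesDemand, rpow_sub_one (hp j).ne']
    field_simp [(hp j).ne']
  rw [hspend]
  rcases (cesPriceSum_nonneg ha (fun j => (hp j).le) (r := r)).eq_or_lt with h | h
  · rw [← h, mul_zero]; exact hB
  · rw [div_mul_cancel₀ _ h.ne']

lemma sum_mul_cesDemand_rpow (ha : ∀ j, 0 < a j) (hp : ∀ j, 0 < p j) (hB : 0 ≤ B) (hρ : ρ ≠ 1) :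
    ∑ j, a j * cesDemand a p (ρ / (ρ - 1)) B j ^ ρ
      = (B / cesPriceSum a p (ρ / (ρ - 1))) ^ ρ * cesPriceSum a p (ρ / (ρ - 1)) := by
  set r := ρ / (ρ - 1) with hr
  have hρ' : ρ - 1 ≠ 0 := sub_ne_zero.mpr hρ
  have hS := cesPriceSum_nonneg (fun j => (ha j).le) (fun j => (hp j).le) (r := r)
  nth_rw 2 [cesPriceSum]; rw [mul_sum]
  refine sum_congr rfl fun j _ => ?_
  rw [cesDemand, mul_rpow (div_nonneg hB hS) (mul_nonneg (rpow_nonneg (ha j).le _)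
      (rpow_nonneg (hp j).le _)), mul_rpow (rpow_nonneg (ha j).le _) (rpow_nonneg (hp j).le _),
    ← rpow_mul (ha j).le, ← rpow_mul (hp j).le]
  have hpexp : (r - 1) * ρ = r := by rw [hr]; field_simp; ring
  have haexp : a j * a j ^ ((1 - r) * ρ) = a j ^ (1 - r) := by
    nth_rw 1 [← rpow_one (a j)]; rw [← rpow_add (ha j)]
    congr 1; rw [hr]; field_simp; ring
  rw [hpexp, ← haexp]
  ring

lemma div_rpow_mul_self (hS : 0 ≤ S) (hB : 0 ≤ B) (hρ : ρ < 1) :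
    (B / S) ^ ρ * S = S ^ (1 - ρ) * B ^ ρ := by
  rcases hS.eq_or_lt with rfl | hS
  · rw [mul_zero, zero_rpow (by linarith), zero_mul]
  · rw [div_rpow hB hS.le, rpow_sub hS, rpow_one]
    field_simp [(rpow_pos_of_pos hS ρ).ne']

lemma rpow_one_sub_mul_rpow_rpow_one_div (hS : 0 ≤ S) (hB : 0 ≤ B) (hρ₀ : 0 < ρ) (hρ₁ : ρ ≠ 1) :
    (S ^ (1 - ρ) * B ^ ρ) ^ (1 / ρ) = B * S ^ (-1 / (ρ / (ρ - 1))) := by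
  have hexp : (1 - ρ) * (1 / ρ) = -1 / (ρ / (ρ - 1)) := by
    have : ρ - 1 ≠ 0 := sub_ne_zero.mpr hρ₁
    field_simp; ring
  rw [mul_rpow (rpow_nonneg hS _) (rpow_nonneg hB _), ← rpow_mul hS, hexp, one_div,
    rpow_rpow_inv hB hρ₀.ne', mul_comm]

end

theorem stmt5 {m : ℕ} (a : Fin m → ℝ) (ha : ∀ j, 0 < a j)
    (ρ : ℝ) (hρ : ρ ∈ Set.Ioo (0 : ℝ) 1)
    (p : Fin m → ℝ) (hp : ∀ j, 0 < p j) (B : ℝ) (hB : 0 < B) :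
    IsLUB {t : ℝ | ∃ x : Fin m → ℝ, 0 ≤ x ∧ ∑ j, p j * x j ≤ B ∧
        (∑ j, a j * x j ^ ρ) ^ (1 / ρ) = t}
      (B * (∑ j, a j ^ (1 - ρ / (ρ - 1)) * p j ^ (ρ / (ρ - 1))) ^ (-1 / (ρ / (ρ - 1)))) := by
  obtain ⟨hρ₀, hρ₁⟩ := hρ
  change IsLUB _ (B * cesPriceSum a p (ρ / (ρ - 1)) ^ (-1 / (ρ / (ρ - 1))))
  have hS := cesPriceSum_nonneg (fun j => (ha j).le) (fun j => (hp j).le) (r := ρ / (ρ - 1))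
  rw [← rpow_one_sub_mul_rpow_rpow_one_div hS hB.le hρ₀ hρ₁.ne]
  refine IsGreatest.isLUB ⟨⟨cesDemand a p (ρ / (ρ - 1)) B,
    cesDemand_nonneg (fun j => (ha j).le) (fun j => (hp j).le) hB.le,
    sum_mul_cesDemand_le (fun j => (ha j).le) hp hB.le, ?_⟩, ?_⟩
  · rw [sum_mul_cesDemand_rpow ha hp hB.le hρ₁.ne, div_rpow_mul_self hS hB.le hρ₁]
  · rintro _ ⟨x, hx, hbudget, rfl⟩
    have hspend : 0 ≤ ∑ j, p j * x j := sum_nonneg fun j _ => mul_nonneg (hp j).le (hx j)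
    have hutility : ∑ j, a j * x j ^ ρ ≤ cesPriceSum a p (ρ / (ρ - 1)) ^ (1 - ρ) * B ^ ρ :=
      (sum_mul_rpow_le_cesPriceSum (fun j => (ha j).le) hp hx hρ₀ hρ₁).trans (by gcongr)
    exact rpow_le_rpow (sum_nonneg fun j _ => mul_nonneg (ha j).le (rpow_nonneg (hx j) _))
      hutility (by positivity)
end

section
/- Let d: ℝ^m_{≥0} → ℝ_{≥0} be convex and non-decreasing, and for B > 0 let h(p, B) = min { d(y) : y ≥ 0, ⟨p, y⟩ = B } be the indirect disutility (for p ≥ 0, p ≠ 0). Then for any x ∈ ℝ^m_{≥0} with x ≠ 0 and any B > 0, d(x) = max { h(p, B) : p ≥ 0, ⟨p, x⟩ = B }. -/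
/-!
If `d 0 < d x`, the strict lower contour set `L = {y ≥ 0 | d y < d x}` is convex and, by
monotonicity, `L + (open negative orthant)` is an open convex set missing `x`. Hahn–Banach gives
a functional `f` with `f < f x` there; the cone structure makes `f` a nonnegative price vector `q`,
and convexity of `d` (which lets one move slightly upward inside `L`) makes the inequality strict
on `L` itself. Rescaled to spend exactly `B` on `x`, `q` becomes a price `p` at which every bundle
of cost `B` has disutility at least `d x`, so `h p = d x`; conversely `x` is affordable at any
price with `⟨p, x⟩ = B`, so `h p ≤ d x`. If `d 0 = d x`, `x` minimises `d` and any such price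
works.
-/

open Set Topology Pointwise

lemma nonpos_of_forall_pos_mul_lt {a b : ℝ} (h : ∀ s > 0, s * b < a) : b ≤ 0 := by
  by_contra! hb
  have := h ((|a| + 1) / b) (by positivity)
  rw [div_mul_cancel₀ _ hb.ne'] at this
  linarith [le_abs_self a]

lemma ConvexOn.exists_pos_lt_add_smul {E : Type*} [AddCommGroup E] [Module ℝ E] {s : Set E}
    {f : E → ℝ} {y z : E} {c : ℝ} (hf : ConvexOn ℝ s f) (hy : y ∈ s) (hyz : y + z ∈ s)
    (hlt : f y < c) : ∃ t : ℝ, 0 < t ∧ f (y + t • z) < c := by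
  have hchord : ∀ᶠ t in 𝓝 (0 : ℝ), (1 - t) * f y + t * f (y + z) < c :=
    (Continuous.tendsto (by fun_prop) 0).eventually_lt_const (by simpa using hlt)
  have hpos : ∀ᶠ t in 𝓝[>] (0 : ℝ), 0 < t := self_mem_nhdsWithin
  obtain ⟨t, ⟨hct, ht1⟩, ht0⟩ := ((hchord.and (eventually_lt_nhds one_pos)).filter_mono
    nhdsWithin_le_nhds |>.and hpos).exists
  refine ⟨t, ht0, lt_of_le_of_lt ?_ hct⟩
  have hseg : (1 - t) • y + t • (y + z) = y + t • z := by
    rw [smul_add, ← add_assoc, ← add_smul, sub_add_cancel, one_smul]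
  simpa only [hseg, smul_eq_mul] using
    hf.2 hy hyz (sub_nonneg.2 ht1.le) ht0.le (sub_add_cancel 1 t)

lemma ContinuousLinearMap.apply_eq_dotProduct {ι : Type*} [Fintype ι] [DecidableEq ι]
    (f : (ι → ℝ) →L[ℝ] ℝ) (y : ι → ℝ) : f y = (fun j => f (Pi.single j 1)) ⬝ᵥ y := by
  conv_lhs => rw [← Finset.univ_sum_single y]
  simp only [map_sum, dotProduct]
  refine Finset.sum_congr rfl fun j _ => ?_
  rw [mul_comm, ← smul_eq_mul, ← map_smul, ← Pi.single_smul', smul_eq_mul, mul_one]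

section Orthant

variable {ι : Type*} [Fintype ι] {d : (ι → ℝ) → ℝ} {x : ι → ℝ}

lemma exists_clm_nonneg_separating_lowerContour (hconv : ConvexOn ℝ {y | 0 ≤ y} d)
    (hmono : ∀ x y : ι → ℝ, 0 ≤ y → y ≤ x → d y ≤ d x) (hx : 0 ≤ x) (h0 : d 0 < d x) :
    ∃ f : (ι → ℝ) →L[ℝ] ℝ, (∀ y, 0 ≤ y → 0 ≤ f y) ∧ ∀ y, 0 ≤ y → d y < d x → f y < f x := by
  set L := {y : ι → ℝ | 0 ≤ y ∧ d y < d x}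
  set N : Set (ι → ℝ) := univ.pi fun _ => Iio 0
  have hLN : L ⊆ L + N := by
    rintro y ⟨hy, hdy⟩
    obtain ⟨t, ht, hdt⟩ :=
      hconv.exists_pos_lt_add_smul hy (add_nonneg hy zero_le_one : 0 ≤ y + 1) hdy
    refine ⟨y + t • 1, ⟨add_nonneg hy (smul_nonneg ht.le zero_le_one), hdt⟩, -(t • 1),
      fun i _ => ?_, add_neg_cancel_right _ _⟩
    simpa using ht
  have hxLN : x ∉ L + N := by
    rintro ⟨y, ⟨hy, hdy⟩, n, hn, rfl⟩
    exact (hmono y (y + n) hx (add_le_of_nonpos_right fun i => (hn i trivial).le)).not_gt hdy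
  obtain ⟨f, hf⟩ := geometric_hahn_banach_open_point
    ((hconv.convex_lt (d x) : Convex ℝ L).add (convex_pi fun _ _ => convex_Iio 0))
    (isOpen_set_pi finite_univ fun _ _ => isOpen_Iio).add_left hxLN
  refine ⟨f, fun y hy => ?_, fun y hy hdy => hf y (hLN ⟨hy, hdy⟩)⟩
  -- `N` is a cone containing `-(s • y) - 1` for every `s > 0`, so `f` cannot be negative at `y`.
  have hscaled : ∀ s > 0, s * -f y < f x + f 1 := fun s hs => by
    have hmem : 0 + (-(s • y) - 1) ∈ L + N := ⟨0, ⟨le_rfl, h0⟩, _, fun i _ => by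
      simp only [mem_Iio, Pi.sub_apply, Pi.neg_apply, Pi.smul_apply, smul_eq_mul, Pi.one_apply]
      linarith [mul_nonneg hs.le (hy i)], rfl⟩
    have := hf _ hmem
    simp only [zero_add, map_sub, map_neg, map_smul, smul_eq_mul] at this
    linarith
  linarith [nonpos_of_forall_pos_mul_lt hscaled]

lemma exists_supporting_price (hconv : ConvexOn ℝ {y | 0 ≤ y} d)
    (hmono : ∀ x y : ι → ℝ, 0 ≤ y → y ≤ x → d y ≤ d x) (hx : 0 ≤ x) (hx0 : x ≠ 0) :
    ∃ q : ι → ℝ, 0 ≤ q ∧ 0 < q ⬝ᵥ x ∧ ∀ y, 0 ≤ y → d y < d x → q ⬝ᵥ y < q ⬝ᵥ x := by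
  classical
  by_cases h0 : d 0 < d x
  · obtain ⟨f, hf_nonneg, hf_lt⟩ := exists_clm_nonneg_separating_lowerContour hconv hmono hx h0
    refine ⟨fun j => f (Pi.single j 1), fun j => hf_nonneg _ (Pi.single_nonneg.2 zero_le_one),
      ?_, fun y hy hdy => ?_⟩
    · simpa [← f.apply_eq_dotProduct] using hf_lt 0 le_rfl h0
    · simpa [← f.apply_eq_dotProduct] using hf_lt y hy hdy
  · -- `x` minimises `d` on the orthant, so every price supports it.
    refine ⟨x, hx, (dotProduct_nonneg_of_nonneg hx hx).lt_of_ne'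
      (dotProduct_self_eq_zero.not.2 hx0), fun y hy hdy => ?_⟩
    exact absurd ((hmono y 0 le_rfl hy).trans_lt hdy) h0

end Orthant

theorem stmt9_general {m : ℕ} (d : (Fin m → ℝ) → ℝ) (B : ℝ) (hB : 0 < B)
    (hconv : ConvexOn ℝ {x : Fin m → ℝ | 0 ≤ x} d)
    (hmono : ∀ x y : Fin m → ℝ, 0 ≤ y → y ≤ x → d y ≤ d x)
    (h : (Fin m → ℝ) → ℝ)
    (hh : ∀ p : Fin m → ℝ, 0 ≤ p → p ≠ 0 →
      IsLeast {t : ℝ | ∃ y : Fin m → ℝ, 0 ≤ y ∧ ∑ j, p j * y j = B ∧ d y = t} (h p))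
    (x : Fin m → ℝ) (hx : 0 ≤ x) (hx0 : x ≠ 0) :
    IsGreatest {t : ℝ | ∃ p : Fin m → ℝ, 0 ≤ p ∧ ∑ j, p j * x j = B ∧ h p = t} (d x) := by
  have hp0 : ∀ p : Fin m → ℝ, p ⬝ᵥ x = B → p ≠ 0 := by
    rintro p hpx rfl
    exact hB.ne (by simpa using hpx)
  refine ⟨?_, ?_⟩
  · obtain ⟨q, hq, hqx, hsupp⟩ := exists_supporting_price hconv hmono hx hx0
    set p := (B / (q ⬝ᵥ x)) • q
    have hpy : ∀ y, p ⬝ᵥ y = B / (q ⬝ᵥ x) * (q ⬝ᵥ y) := fun y => smul_dotProduct _ q y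
    have hpx : p ⬝ᵥ x = B := by rw [hpy, div_mul_cancel₀ _ hqx.ne']
    have hp : 0 ≤ p := smul_nonneg (div_pos hB hqx).le hq
    obtain ⟨⟨y, hy, hy_cost, hdy⟩, hlow⟩ := hh p hp (hp0 p hpx)
    refine ⟨p, hp, hpx, le_antisymm (hlow ⟨x, hx, hpx, rfl⟩) ?_⟩
    have hcost : p ⬝ᵥ y = p ⬝ᵥ x := hy_cost.trans hpx.symm
    rw [hpy, hpy] at hcost
    rw [← hdy]
    exact not_lt.1 fun hlt => (hsupp y hy hlt).ne (mul_left_cancel₀ (div_pos hB hqx).ne' hcost)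
  · rintro _ ⟨p, hp, hpx, rfl⟩
    exact (hh p hp (hp0 p hpx)).2 ⟨x, hx, hpx, rfl⟩

theorem stmt9 {m : ℕ} (d : (Fin m → ℝ) → ℝ) (B : ℝ) (hB : 0 < B)
    (hnn : ∀ x : Fin m → ℝ, 0 ≤ x → 0 ≤ d x)
    (hconv : ConvexOn ℝ {x : Fin m → ℝ | 0 ≤ x} d)
    (hmono : ∀ x y : Fin m → ℝ, 0 ≤ y → y ≤ x → d y ≤ d x)
    (h : (Fin m → ℝ) → ℝ)
    (hh : ∀ p : Fin m → ℝ, 0 ≤ p → p ≠ 0 →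
      IsLeast {t : ℝ | ∃ y : Fin m → ℝ, 0 ≤ y ∧ ∑ j, p j * y j = B ∧ d y = t} (h p))
    (x : Fin m → ℝ) (hx : 0 ≤ x) (hx0 : x ≠ 0) :
    IsGreatest {t : ℝ | ∃ p : Fin m → ℝ, 0 ≤ p ∧ ∑ j, p j * x j = B ∧ h p = t} (d x) :=
  stmt9_general d B hB hconv hmono h hh x hx hx0
end

section
/- (Roy's identity for chores, direction 1.) Let d: ℝ^m_{≥0} → ℝ_{≥0} be 1-homogeneous, convex, non-decreasing with d(x) > 0 for x ≠ 0, let B > 0, let h(p,B) = min_{x ≥ 0, ⟨p,x⟩=B} d(x), and let ĥ be its extension ĥ(p,B) = h(max{p,0},B) to ℝ^m. Fix p ∈ ℝ^m_{≥0}, p ≠ 0, and let g be a subgradient of the convex function q ↦ 1/ĥ(q, B) at p. Then g ≥ 0, ⟨g, p⟩ > 0, and x := B·g/⟨g, p⟩ satisfies ⟨p, x⟩ = B and d(x) = h(p, B), i.e., x is an optimal demand under p. -/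
/-!
Scaling the earning constraint by `c > 0` divides the optimal disutility by `c`, so `F = 1/ĥ` is
positively homogeneous on the orthant, and the subgradient inequality at `0` and at `2p` gives
`⟨g, p⟩ = F p = 1/h p`. Along the ray `p - t eⱼ` the positive part, hence `F`, is eventually
constant, which forces `gⱼ ≥ 0`. The subgradient inequality now reads `⟨g, q⟩ ≤ 1/h(q⁺)`, and
`B/h(q⁺)` is the support function at `q` of the sublevel set `{y ≥ 0 | d y ≤ 1}`: by Hahn–Banach
`B g` lies in the closure of that set, so `d (B g) ≤ 1`, i.e. `d x ≤ h p` for `x = B h(p) g`.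
-/

open Matrix

variable {ι : Type*}

lemma map_zero_of_homogeneous {d : (ι → ℝ) → ℝ}
    (hhom : ∀ c : ℝ, 0 < c → ∀ x : ι → ℝ, 0 ≤ x → d (c • x) = c * d x) : d 0 = 0 := by
  have h2 := hhom 2 two_pos 0 le_rfl
  rw [smul_zero] at h2
  linarith

lemma subadditive_of_convexOn_of_homogeneous {d : (ι → ℝ) → ℝ}
    (hconv : ConvexOn ℝ {x | 0 ≤ x} d)
    (hhom : ∀ c : ℝ, 0 < c → ∀ x : ι → ℝ, 0 ≤ x → d (c • x) = c * d x)
    {a b : ι → ℝ} (ha : 0 ≤ a) (hb : 0 ≤ b) : d (a + b) ≤ d a + d b := by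
  have hhalf : (0 : ℝ) ≤ 1 / 2 := by norm_num
  have hmid := hconv.2 ha hb hhalf hhalf (by norm_num)
  have hdouble := hhom 2 two_pos _ (hconv.1 ha hb hhalf hhalf (by norm_num))
  rw [smul_add, smul_smul, smul_smul] at hdouble
  norm_num at hdouble
  simp only [smul_eq_mul] at hmid
  linarith

lemma posPart_sub_single_eq [DecidableEq ι] {p : ι → ℝ} {j : ι} {t : ℝ} (ht : p j ≤ t) :
    (p - Pi.single j t)⁺ = (p - Pi.single j (p j))⁺ := by
  ext i
  rcases eq_or_ne i j with rfl | hij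
  · simp [posPart_eq_zero.2 (sub_nonpos.2 ht)]
  · simp [hij]

lemma eq_of_posPart_eq {F h : (ι → ℝ) → ℝ} (hF : ∀ q : ι → ℝ, q⁺ ≠ 0 → F q = 1 / h q⁺)
    (hF0 : ∀ q : ι → ℝ, q⁺ = 0 → F q = 0) {q r : ι → ℝ} (hqr : q⁺ = r⁺) : F q = F r := by
  by_cases hq : q⁺ = 0
  · rw [hF0 q hq, hF0 r (hqr ▸ hq)]
  · rw [hF q hq, hF r (hqr ▸ hq), hqr]

lemma eq_one_div_of_nonneg {F h : (ι → ℝ) → ℝ} (hF : ∀ q : ι → ℝ, q⁺ ≠ 0 → F q = 1 / h q⁺)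
    {p : ι → ℝ} (hp : 0 ≤ p) (hp0 : p ≠ 0) : F p = 1 / h p := by
  have hpp : p⁺ = p := posPart_eq_self.2 hp
  rw [hF p (by rwa [hpp]), hpp]

variable [Fintype ι]

lemma le_of_mem_closure_sublevel {d : (ι → ℝ) → ℝ}
    (hconv : ConvexOn ℝ {x | 0 ≤ x} d)
    (hmono : ∀ x y : ι → ℝ, 0 ≤ y → y ≤ x → d y ≤ d x)
    (hhom : ∀ c : ℝ, 0 < c → ∀ x : ι → ℝ, 0 ≤ x → d (c • x) = c * d x)
    {r : ℝ} {z : ι → ℝ} (hz : 0 ≤ z) (hzC : z ∈ closure {x ∈ {x : ι → ℝ | 0 ≤ x} | d x ≤ r}) :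
    d z ≤ r := by
  have hd1 : 0 ≤ d 1 := map_zero_of_homogeneous hhom ▸ hmono 1 0 le_rfl zero_le_one
  refine le_of_forall_pos_le_add fun ε hε => ?_
  set δ := ε / (d 1 + 1)
  have hδ : 0 < δ := by positivity
  obtain ⟨y, ⟨hy0, hyr⟩, hzy⟩ := Metric.mem_closure_iff.mp hzC δ hδ
  have hzle : z ≤ y + δ • 1 := fun j => by
    have := abs_lt.mp (Real.dist_eq _ _ ▸ (dist_le_pi_dist z y j).trans_lt hzy)
    simp only [Pi.add_apply, Pi.smul_apply, Pi.one_apply, smul_eq_mul, mul_one]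
    linarith
  have hδd1 : δ * d 1 ≤ ε := by
    rw [div_mul_eq_mul_div, div_le_iff₀ (by positivity)]
    nlinarith
  calc d z ≤ d (y + δ • 1) := hmono _ _ hz hzle
    _ ≤ d y + d (δ • 1) :=
      subadditive_of_convexOn_of_homogeneous hconv hhom hy0 (smul_nonneg hδ.le zero_le_one)
    _ = d y + δ * d 1 := by rw [hhom δ hδ 1 zero_le_one]
    _ ≤ r + ε := add_le_add hyr hδd1

lemma mem_closure_of_forall_dotProduct_le {C : Set (ι → ℝ)} (hC : Convex ℝ C) {z : ι → ℝ}
    (h : ∀ q : ι → ℝ, ∃ a ∈ C, q ⬝ᵥ z ≤ q ⬝ᵥ a) : z ∈ closure C := by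
  classical
  by_contra hz
  obtain ⟨f, u, hfC, hfz⟩ := geometric_hahn_banach_closed_point hC.closure isClosed_closure hz
  set q : ι → ℝ := fun i => f fun j => if i = j then 1 else 0
  have hf : ∀ y, f y = q ⬝ᵥ y := fun y => by
    rw [← ContinuousLinearMap.coe_coe, LinearMap.pi_apply_eq_sum_univ, dotProduct]
    simp only [ContinuousLinearMap.coe_coe, smul_eq_mul, mul_comm, q]
  obtain ⟨a, haC, hle⟩ := h q
  have := hfC a (subset_closure haC)
  rw [← hf, ← hf] at hle
  linarith

lemma dotProduct_eq_of_subgradient {F : (ι → ℝ) → ℝ} {p g : ι → ℝ}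
    (hg : ∀ q, F p + g ⬝ᵥ (q - p) ≤ F q) (hF0 : F 0 = 0) (hF2 : F ((2 : ℝ) • p) = 2 * F p) :
    g ⬝ᵥ p = F p := by
  have h0 := hg 0
  have h2 := hg ((2 : ℝ) • p)
  rw [zero_sub, dotProduct_neg, hF0] at h0
  rw [hF2, two_smul, add_sub_cancel_right] at h2
  linarith

lemma nonneg_of_subgradient_of_bddAbove_ray [DecidableEq ι] {F : (ι → ℝ) → ℝ} {p g : ι → ℝ}
    (hg : ∀ q, F p + g ⬝ᵥ (q - p) ≤ F q) (j : ι) {M T : ℝ}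
    (hM : ∀ t, T ≤ t → F (p - Pi.single j t) ≤ M) : 0 ≤ g j := by
  by_contra! hgj
  set t := max T ((M - F p) / -g j + 1)
  have hray := (hg (p - Pi.single j t)).trans (hM t (le_max_left _ _))
  rw [sub_sub_cancel_left, dotProduct_neg, dotProduct_single] at hray
  have ht : (M - F p) / -g j < t := (lt_add_one _).trans_le (le_max_right _ _)
  rw [div_lt_iff₀ (neg_pos.2 hgj)] at ht
  linarith

def budgetCosts (d : (ι → ℝ) → ℝ) (B : ℝ) (p : ι → ℝ) : Set ℝ :=
  {t | ∃ x, 0 ≤ x ∧ p ⬝ᵥ x = B ∧ d x = t}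

lemma isLeast_budgetCosts_smul {d : (ι → ℝ) → ℝ}
    (hhom : ∀ c : ℝ, 0 < c → ∀ x : ι → ℝ, 0 ≤ x → d (c • x) = c * d x)
    {B v c : ℝ} {p : ι → ℝ} (hv : IsLeast (budgetCosts d B p) v) (hc : 0 < c) :
    IsLeast (budgetCosts d B (c • p)) (v / c) := by
  constructor
  · obtain ⟨x, hx0, hxB, rfl⟩ := hv.1
    refine ⟨c⁻¹ • x, smul_nonneg (inv_nonneg.2 hc.le) hx0, ?_, ?_⟩
    · rw [smul_dotProduct, dotProduct_smul, smul_smul, mul_inv_cancel₀ hc.ne', one_smul, hxB]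
    · rw [hhom _ (inv_pos.2 hc) x hx0, div_eq_inv_mul]
  · rintro _ ⟨x, hx0, hxB, rfl⟩
    have hle := hv.2 ⟨c • x, smul_nonneg hc.le hx0, by rwa [dotProduct_smul, ← smul_dotProduct], rfl⟩
    rw [hhom c hc x hx0] at hle
    rw [div_le_iff₀ hc]
    linarith

lemma pos_of_mem_budgetCosts {d : (ι → ℝ) → ℝ} (hpos : ∀ x : ι → ℝ, 0 ≤ x → x ≠ 0 → 0 < d x)
    {B v : ℝ} (hB : B ≠ 0) {p : ι → ℝ} (hv : v ∈ budgetCosts d B p) : 0 < v := by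
  obtain ⟨x, hx0, hxB, rfl⟩ := hv
  refine hpos x hx0 ?_
  rintro rfl
  exact hB (by simpa using hxB.symm)

lemma map_smul_eq_mul_of_one_div_value {d h F : (ι → ℝ) → ℝ}
    (hhom : ∀ c : ℝ, 0 < c → ∀ x : ι → ℝ, 0 ≤ x → d (c • x) = c * d x)
    {B : ℝ} (hh : ∀ r, 0 ≤ r → r ≠ 0 → IsLeast (budgetCosts d B r) (h r))
    (hF : ∀ q : ι → ℝ, q⁺ ≠ 0 → F q = 1 / h q⁺)
    {p : ι → ℝ} (hp : 0 ≤ p) (hp0 : p ≠ 0) {c : ℝ} (hc : 0 < c) : F (c • p) = c * F p := by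
  have hcp : 0 ≤ c • p := smul_nonneg hc.le hp
  have hcp0 : c • p ≠ 0 := smul_ne_zero hc.ne' hp0
  rw [eq_one_div_of_nonneg hF hcp hcp0, eq_one_div_of_nonneg hF hp hp0,
    (hh _ hcp hcp0).unique (isLeast_budgetCosts_smul hhom (hh p hp hp0) hc)]
  field_simp

lemma exists_le_dotProduct_eq_posPart_dotProduct (q : ι → ℝ) {x : ι → ℝ} (hx : 0 ≤ x) :
    ∃ x', 0 ≤ x' ∧ x' ≤ x ∧ q ⬝ᵥ x' = q⁺ ⬝ᵥ x := by
  classical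
  refine ⟨fun j => if 0 ≤ q j then x j else 0, fun j => ?_, fun j => ?_, ?_⟩
  · dsimp only
    split_ifs
    exacts [hx j, le_rfl]
  · dsimp only
    split_ifs
    exacts [le_rfl, hx j]
  · refine Finset.sum_congr rfl fun j _ => ?_
    by_cases hq : 0 ≤ q j
    · simp [hq]
    · simp [hq, posPart_eq_zero.2 (not_le.1 hq).le]

lemma smul_mem_closure_sublevel {d : (ι → ℝ) → ℝ}
    (hconv : ConvexOn ℝ {x | 0 ≤ x} d)
    (hmono : ∀ x y : ι → ℝ, 0 ≤ y → y ≤ x → d y ≤ d x)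
    (hhom : ∀ c : ℝ, 0 < c → ∀ x : ι → ℝ, 0 ≤ x → d (c • x) = c * d x)
    (hpos : ∀ x : ι → ℝ, 0 ≤ x → x ≠ 0 → 0 < d x)
    {B : ℝ} (hB : 0 < B) {h : (ι → ℝ) → ℝ} (hh : ∀ r, 0 ≤ r → r ≠ 0 → h r ∈ budgetCosts d B r)
    {g : ι → ℝ} (hg : 0 ≤ g) (hgq : ∀ q : ι → ℝ, q⁺ ≠ 0 → g ⬝ᵥ q ≤ 1 / h q⁺) :
    B • g ∈ closure {x ∈ {x : ι → ℝ | 0 ≤ x} | d x ≤ 1} := by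
  refine mem_closure_of_forall_dotProduct_le (hconv.convex_le 1) fun q => ?_
  by_cases hq : q⁺ = 0
  · refine ⟨0, ⟨le_refl (0 : ι → ℝ), (map_zero_of_homogeneous hhom).trans_le zero_le_one⟩, ?_⟩
    rw [dotProduct_zero, dotProduct_smul, smul_eq_mul]
    refine mul_nonpos_of_nonneg_of_nonpos hB.le (Finset.sum_nonpos fun j _ => ?_)
    exact mul_nonpos_of_nonpos_of_nonneg (posPart_eq_zero.1 hq j) (hg j)
  · obtain ⟨x, hx0, hxB, hxd⟩ := hh q⁺ (posPart_nonneg q) hq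
    have hv : 0 < h q⁺ := pos_of_mem_budgetCosts hpos hB.ne' ⟨x, hx0, hxB, hxd⟩
    obtain ⟨x', hx'0, hx'x, hx'q⟩ := exists_le_dotProduct_eq_posPart_dotProduct q hx0
    refine ⟨(h q⁺)⁻¹ • x', ⟨smul_nonneg (inv_nonneg.2 hv.le) hx'0, ?_⟩, ?_⟩
    · rw [hhom _ (inv_pos.2 hv) _ hx'0, inv_mul_le_one₀ hv, ← hxd]
      exact hmono _ _ hx'0 hx'x
    · rw [dotProduct_smul, dotProduct_smul, hx'q, hxB, dotProduct_comm, smul_eq_mul, smul_eq_mul]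
      calc B * (g ⬝ᵥ q) ≤ B * (1 / h q⁺) := mul_le_mul_of_nonneg_left (hgq q hq) hB.le
        _ = (h q⁺)⁻¹ * B := by ring

lemma optimal_of_dotProduct_eq_one_div {d : (ι → ℝ) → ℝ}
    (hhom : ∀ c : ℝ, 0 < c → ∀ x : ι → ℝ, 0 ≤ x → d (c • x) = c * d x)
    {B v : ℝ} (hB : 0 < B) {p g : ι → ℝ} (hv : IsLeast (budgetCosts d B p) v) (hv0 : 0 < v)
    (hg : 0 ≤ g) (hgp : g ⬝ᵥ p = 1 / v) (hBg : d (B • g) ≤ 1) :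
    p ⬝ᵥ ((B / (g ⬝ᵥ p)) • g) = B ∧ d ((B / (g ⬝ᵥ p)) • g) = v := by
  have hgp0 : 0 < g ⬝ᵥ p := hgp ▸ one_div_pos.2 hv0
  have hfeas : p ⬝ᵥ ((B / (g ⬝ᵥ p)) • g) = B := by
    rw [dotProduct_smul, dotProduct_comm p g, smul_eq_mul, div_mul_cancel₀ _ hgp0.ne']
  have hx : (B / (g ⬝ᵥ p)) • g = v • B • g := by
    rw [hgp, smul_smul]
    field_simp
  refine ⟨hfeas, le_antisymm ?_ (hv.2 ⟨_, smul_nonneg (div_nonneg hB.le hgp0.le) hg, hfeas, rfl⟩)⟩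
  rw [hx, hhom _ hv0 _ (smul_nonneg hB.le hg)]
  exact mul_le_of_le_one_right hv0.le hBg

theorem stmt12 {m : ℕ} (d : (Fin m → ℝ) → ℝ) (B : ℝ) (hB : 0 < B)
    (hconv : ConvexOn ℝ {x : Fin m → ℝ | 0 ≤ x} d)
    (hmono : ∀ x y : Fin m → ℝ, 0 ≤ y → y ≤ x → d y ≤ d x)
    (hhom : ∀ c : ℝ, 0 < c → ∀ x : Fin m → ℝ, 0 ≤ x → d (c • x) = c * d x)
    (hpos : ∀ x : Fin m → ℝ, 0 ≤ x → x ≠ 0 → 0 < d x)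
    (h : (Fin m → ℝ) → ℝ)
    (hh : ∀ p : Fin m → ℝ, 0 ≤ p → p ≠ 0 →
      IsLeast {t : ℝ | ∃ x : Fin m → ℝ, 0 ≤ x ∧ ∑ j, p j * x j = B ∧ d x = t} (h p))
    (F : (Fin m → ℝ) → ℝ)
    (hF : ∀ q : Fin m → ℝ, (fun j => max (q j) 0) ≠ 0 → F q = 1 / h (fun j => max (q j) 0))
    (hF0 : ∀ q : Fin m → ℝ, (fun j => max (q j) 0) = 0 → F q = 0)
    (p : Fin m → ℝ) (hp : 0 ≤ p) (hp0 : p ≠ 0)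
    (g : Fin m → ℝ)
    (hg : ∀ q : Fin m → ℝ, F p + ∑ j, g j * (q j - p j) ≤ F q) :
    0 ≤ g ∧ 0 < ∑ j, g j * p j ∧
      ∑ j, p j * ((B / ∑ k, g k * p k) * g j) = B ∧
      d (fun j => (B / ∑ k, g k * p k) * g j) = h p := by
  have hF' : ∀ q : Fin m → ℝ, q⁺ ≠ 0 → F q = 1 / h q⁺ := hF
  have hh' : ∀ r, 0 ≤ r → r ≠ 0 → IsLeast (budgetCosts d B r) (h r) := hh
  have hhp : 0 < h p := pos_of_mem_budgetCosts hpos hB.ne' (hh' p hp hp0).1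
  have hFp : F p = 1 / h p := eq_one_div_of_nonneg hF' hp hp0
  have hgp : g ⬝ᵥ p = F p := dotProduct_eq_of_subgradient hg (hF0 0 posPart_zero)
    (map_smul_eq_mul_of_one_div_value hhom hh' hF' hp hp0 two_pos)
  have hg0 : 0 ≤ g := fun j => nonneg_of_subgradient_of_bddAbove_ray hg j fun _ ht =>
    (eq_of_posPart_eq hF' hF0 (posPart_sub_single_eq ht)).le
  have hgq : ∀ q, g ⬝ᵥ q ≤ F q := fun q => by
    have hq : F p + g ⬝ᵥ (q - p) ≤ F q := hg q
    rw [dotProduct_sub, hgp] at hq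
    linarith
  have hBg : d (B • g) ≤ 1 := le_of_mem_closure_sublevel hconv hmono hhom (smul_nonneg hB.le hg0)
    (smul_mem_closure_sublevel hconv hmono hhom hpos hB (fun r hr hr0 => (hh' r hr hr0).1) hg0
      fun q hq => hF' q hq ▸ hgq q)
  obtain ⟨hfeas, hopt⟩ := optimal_of_dotProduct_eq_one_div hhom hB (hh' p hp hp0) hhp hg0
    (hgp.trans hFp) hBg
  exact ⟨hg0, (one_div_pos.2 hhp).trans_eq (hgp.trans hFp).symm, hfeas, hopt⟩
end

section
/- Let (x, {p_i}) be a Lindahl equilibrium of a public goods market with n agents, budgets B_i > 0, and concave utilities u_i: ℝ^m_{≥0} → ℝ_{≥0} satisfying u_i(0) = 0 and u_i(x) > 0. Let y ≥ 0 be any allocation with Σ_j y_j ≤ Σ_i B_i and u_i(y) > 0 for all i. Then, writing 𝔅 = Σ_i B_i, the budget-weighted geometric means satisfy (Π_i u_i(x)^{B_i})^{1/𝔅} ≥ (1/e)^{1/e} · (Π_i u_i(y)^{B_i})^{1/𝔅}. -/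
/-!
Let `c_i = ⟨p_i, y⟩` be agent `i`'s cost of `y` at her Lindahl prices. Scaling `y` by
`t_i = min 1 (B_i / c_i)` makes it affordable, so optimality of `x` and concavity with `u_i 0 = 0`
give `t_i u_i(y) ≤ u_i(x)`, i.e. `B_i log (u_i(y) / u_i(x)) ≤ B_i log (c_i / B_i) ≤ c_i / e`,
the last step being `log s ≤ s - 1` at `s = c_i / (e B_i)`. Since every good is priced at most `1`
in total, `∑ c_i ≤ ∑ y_j ≤ ∑ B_i`; summing over agents and exponentiating gives the bound.
-/

open Real Finset

lemma ConcaveOn.mul_le_of_map_zero {E : Type*} [AddCommGroup E] [Module ℝ E] {s : Set E}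
    {f : E → ℝ} (hf : ConcaveOn ℝ s f) (h0 : (0 : E) ∈ s) (hf0 : f 0 = 0) {y : E} (hy : y ∈ s)
    {t : ℝ} (ht₀ : 0 ≤ t) (ht₁ : t ≤ 1) : t * f y ≤ f (t • y) := by
  simpa [hf0] using hf.2 hy h0 ht₀ (sub_nonneg.2 ht₁) (add_sub_cancel t 1)

lemma mul_log_div_le_div_exp {B c : ℝ} (hB : 0 < B) (hc : 0 < c) :
    B * log (c / B) ≤ c / exp 1 := by
  have hBe : 0 < B * exp 1 := by positivity
  have hlog : log (c / B) = log (c / (B * exp 1)) + 1 := by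
    rw [div_mul_eq_div_div, log_div (by positivity) (exp_ne_zero 1), log_exp]
    ring
  have h := mul_le_mul_of_nonneg_left (log_le_sub_one_of_pos (div_pos hc hBe)) hBe.le
  rw [mul_sub, mul_div_cancel₀ _ hBe.ne'] at h
  rw [hlog, le_div_iff₀ (exp_pos 1)]
  linarith

lemma mul_log_div_le_of_scaled_le {a b B c : ℝ} (ha : 0 < a) (hb : 0 < b) (hB : 0 < B)
    (hc : 0 ≤ c) (h : ∀ t, 0 ≤ t → t ≤ 1 → t * c ≤ B → t * a ≤ b) :
    B * log (a / b) ≤ c / exp 1 := by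
  rcases le_or_gt c B with hcB | hBc
  · have hab : a ≤ b := by simpa using h 1 zero_le_one le_rfl (by simpa)
    have hlog : log (a / b) ≤ 0 := log_nonpos (by positivity) ((div_le_one hb).2 hab)
    nlinarith [div_nonneg hc (exp_pos 1).le]
  · have hc0 : 0 < c := hB.trans hBc
    have hscaled : B / c * a ≤ b :=
      h _ (by positivity) ((div_le_one hc0).2 hBc.le) (div_mul_cancel₀ _ hc0.ne').le
    have hab : a / b ≤ c / B := by
      rw [div_le_div_iff₀ hb hB]
      rw [div_mul_eq_mul_div, div_le_iff₀ hc0] at hscaled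
      linarith
    calc B * log (a / b) ≤ B * log (c / B) := by gcongr
      _ ≤ c / exp 1 := mul_log_div_le_div_exp hB hc0

lemma sum_sum_mul_le_sum_of_sum_le_one {ι κ : Type*} [Fintype ι] [Fintype κ] {p : ι → κ → ℝ}
    {y : κ → ℝ} (hy : 0 ≤ y) (hcol : ∀ j, ∑ i, p i j ≤ 1) :
    ∑ i, ∑ j, p i j * y j ≤ ∑ j, y j := by
  rw [sum_comm]
  refine sum_le_sum fun j _ => ?_
  rw [← sum_mul]
  exact mul_le_of_le_one_left (hy j) (hcol j)

lemma log_prod_rpow {ι : Type*} [Fintype ι] {a : ι → ℝ} (ha : ∀ i, 0 < a i) (w : ι → ℝ) :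
    log (∏ i, a i ^ w i) = ∑ i, w i * log (a i) := by
  rw [log_prod fun i _ => (rpow_pos_of_pos (ha i) _).ne']
  exact sum_congr rfl fun i _ => log_rpow (ha i) _

lemma exp_neg_mul_geomMean_le {ι : Type*} [Fintype ι] {w a b : ι → ℝ} (hw : ∀ i, 0 ≤ w i)
    (ha : ∀ i, 0 < a i) (hb : ∀ i, 0 < b i) {k : ℝ} (hk : 0 ≤ k)
    (h : ∑ i, w i * log (a i / b i) ≤ k * ∑ i, w i) :
    exp (-k) * (∏ i, a i ^ w i) ^ (∑ i, w i)⁻¹ ≤ (∏ i, b i ^ w i) ^ (∑ i, w i)⁻¹ := by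
  rcases (sum_nonneg fun i _ => hw i : 0 ≤ ∑ i, w i).eq_or_lt with hS | hS
  · simpa [← hS] using hk
  have hPa : 0 < ∏ i, a i ^ w i := prod_pos fun i _ => rpow_pos_of_pos (ha i) _
  have hPb : 0 < ∏ i, b i ^ w i := prod_pos fun i _ => rpow_pos_of_pos (hb i) _
  rw [← log_le_log_iff (by positivity) (by positivity), log_mul (by positivity) (by positivity),
    log_exp, log_rpow hPa, log_rpow hPb, log_prod_rpow ha, log_prod_rpow hb]
  have hsplit : ∑ i, w i * log (a i / b i) = ∑ i, w i * log (a i) - ∑ i, w i * log (b i) := by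
    rw [← sum_sub_distrib]
    exact sum_congr rfl fun i _ => by rw [log_div (ha i).ne' (hb i).ne']; ring
  rw [hsplit] at h
  calc -k + (∑ i, w i)⁻¹ * ∑ i, w i * log (a i)
      = (∑ i, w i)⁻¹ * (∑ i, w i * log (a i) - k * ∑ i, w i) := by field_simp; ring
    _ ≤ (∑ i, w i)⁻¹ * ∑ i, w i * log (b i) := by gcongr; linarith

theorem stmt16_general {n m : ℕ} (u : Fin n → (Fin m → ℝ) → ℝ) (B : Fin n → ℝ)
    (hB : ∀ i, 0 < B i)
    (hconc : ∀ i, ConcaveOn ℝ {x : Fin m → ℝ | 0 ≤ x} (u i))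
    (hu0 : ∀ i, u i 0 = 0)
    (x : Fin m → ℝ) (hux : ∀ i, 0 < u i x)
    (p : Fin n → Fin m → ℝ) (hp : ∀ i, 0 ≤ p i)
    (hopt : ∀ i, ∀ z : Fin m → ℝ, 0 ≤ z → ∑ j, p i j * z j ≤ B i → u i z ≤ u i x)
    (hprice : ∀ j, ∑ i, p i j ≤ 1)
    (y : Fin m → ℝ) (hy : 0 ≤ y) (hyB : ∑ j, y j ≤ ∑ i, B i)
    (huy : ∀ i, 0 < u i y) :
    ((Real.exp 1)⁻¹) ^ ((Real.exp 1)⁻¹) * (∏ i, u i y ^ B i) ^ (∑ i, B i)⁻¹ ≤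
      (∏ i, u i x ^ B i) ^ (∑ i, B i)⁻¹ := by
  have hagent : ∀ i, B i * log (u i y / u i x) ≤ (∑ j, p i j * y j) / exp 1 := by
    intro i
    refine mul_log_div_le_of_scaled_le (huy i) (hux i) (hB i)
      (sum_nonneg fun j _ => mul_nonneg (hp i j) (hy j)) fun t ht₀ ht₁ htB => ?_
    have hscale := (hconc i).mul_le_of_map_zero (show (0 : Fin m → ℝ) ≤ 0 from le_rfl) (hu0 i)
      hy ht₀ ht₁
    refine hscale.trans (hopt i _ (smul_nonneg ht₀ hy) ?_)
    simpa [mul_sum, mul_left_comm] using htB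
  have hsum : ∑ i, B i * log (u i y / u i x) ≤ (exp 1)⁻¹ * ∑ i, B i :=
    calc ∑ i, B i * log (u i y / u i x) ≤ (∑ i, ∑ j, p i j * y j) / exp 1 := by
          rw [sum_div]; exact sum_le_sum fun i _ => hagent i
      _ ≤ (∑ i, B i) / exp 1 := by
          gcongr ?_ / _
          exact (sum_sum_mul_le_sum_of_sum_le_one hy hprice).trans hyB
      _ = (exp 1)⁻¹ * ∑ i, B i := div_eq_inv_mul _ _
  have hconst : (exp 1)⁻¹ ^ (exp 1)⁻¹ = exp (-(exp 1)⁻¹) := by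
    rw [rpow_def_of_pos (by positivity), log_inv, log_exp, neg_one_mul]
  rw [hconst]
  exact exp_neg_mul_geomMean_le (fun i => (hB i).le) huy hux (by positivity) hsum

theorem stmt16 {n m : ℕ} (u : Fin n → (Fin m → ℝ) → ℝ) (B : Fin n → ℝ)
    (hB : ∀ i, 0 < B i)
    (hconc : ∀ i, ConcaveOn ℝ {x : Fin m → ℝ | 0 ≤ x} (u i))
    (hu0 : ∀ i, u i 0 = 0)
    (x : Fin m → ℝ) (hx : 0 ≤ x) (hux : ∀ i, 0 < u i x)
    (p : Fin n → Fin m → ℝ) (hp : ∀ i, 0 ≤ p i)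
    (haff : ∀ i, ∑ j, p i j * x j ≤ B i)
    (hopt : ∀ i, ∀ z : Fin m → ℝ, 0 ≤ z → ∑ j, p i j * z j ≤ B i → u i z ≤ u i x)
    (hprice : ∀ j, ∑ i, p i j ≤ 1)
    (hprice' : ∀ j, 0 < x j → ∑ i, p i j = 1)
    (y : Fin m → ℝ) (hy : 0 ≤ y) (hyB : ∑ j, y j ≤ ∑ i, B i)
    (huy : ∀ i, 0 < u i y) :
    ((Real.exp 1)⁻¹) ^ ((Real.exp 1)⁻¹) * (∏ i, u i y ^ B i) ^ (∑ i, B i)⁻¹ ≤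
      (∏ i, u i x ^ B i) ^ (∑ i, B i)⁻¹ :=
  stmt16_general u B hB hconc hu0 x hux p hp hopt hprice y hy hyB huy
end

section
/- (Key analytic step of the NSW approximation.) Let B_i > 0 and B'_i ≥ 0 for i = 1,…,n, set 𝔅 = Σ_i B_i, and suppose Σ_i B'_i ≤ 𝔅. Then Σ_i (B_i/𝔅) · log(max{1, B'_i/B_i}) ≤ 1/e. -/
/-!
Only the indices `A = {i | B i ≤ B' i}` contribute. On `A` the log-sum inequality gives
`∑_{A} B i log (B' i / B i) ≤ s log (s' / s) ≤ s log (𝔅 / s)` with `s = ∑_{A} B i`, `s' = ∑_{A} B' i ≤ 𝔅`,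
and `t log (1 / t) ≤ 1 / e` for `t = s / 𝔅`.
-/

open Finset Real

namespace Real

lemma mul_log_inv_le_inv_exp_one {t : ℝ} (ht : 0 ≤ t) : t * log t⁻¹ ≤ (exp 1)⁻¹ := by
  rcases ht.eq_or_lt with rfl | ht
  · simp only [zero_mul, inv_nonneg, (exp_pos 1).le]
  -- With `y = log t⁻¹` this is `y * exp (-y) ≤ exp (-1)`.
  simpa only [log_inv, neg_neg, exp_log ht, mul_comm t, exp_neg] using
    mul_exp_neg_le_exp_neg_one (log t⁻¹)

lemma sum_mul_log_max_one {ι : Type*} (s : Finset ι) (c x : ι → ℝ) :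
    ∑ i ∈ s, c i * log (max 1 (x i)) = ∑ i ∈ s with 1 ≤ x i, c i * log (x i) := by
  rw [sum_filter]
  refine sum_congr rfl fun i _ => ?_
  split_ifs with h
  · rw [max_eq_right h]
  · rw [max_eq_left (not_le.mp h).le, log_one, mul_zero]

/-- The log-sum inequality. -/
lemma sum_mul_log_div_le {ι : Type*} (s : Finset ι) {w v : ι → ℝ}
    (hw : ∀ i ∈ s, 0 < w i) (hv : ∀ i ∈ s, 0 < v i) :
    ∑ i ∈ s, w i * log (v i / w i) ≤ (∑ i ∈ s, w i) * log ((∑ i ∈ s, v i) / ∑ i ∈ s, w i) := by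
  rcases s.eq_empty_or_nonempty with rfl | hs
  · simp
  set W := ∑ i ∈ s, w i
  set V := ∑ i ∈ s, v i
  have hW : 0 < W := sum_pos hw hs
  have hV : 0 < V := sum_pos hv hs
  -- `log x ≤ x - 1` at `x = (v i / w i) / (V / W)`, summed over `s`.
  have term : ∀ i ∈ s, w i * log (v i / w i) ≤ w i * log (V / W) + (v i * (W / V) - w i) := by
    intro i hi
    have hwi := hw i hi
    have hvi := hv i hi
    have hlog := log_le_sub_one_of_pos (by positivity : 0 < (v i / w i) / (V / W))
    rw [log_div (by positivity) (by positivity)] at hlog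
    have hscale : w i * ((v i / w i) / (V / W) - 1) = v i * (W / V) - w i := by
      field_simp
    linarith [mul_le_mul_of_nonneg_left hlog hwi.le]
  calc ∑ i ∈ s, w i * log (v i / w i)
      ≤ ∑ i ∈ s, (w i * log (V / W) + (v i * (W / V) - w i)) := sum_le_sum term
    _ = W * log (V / W) + (V * (W / V) - W) := by
      rw [sum_add_distrib, sum_sub_distrib, ← sum_mul, ← sum_mul]
    _ = W * log (V / W) := by rw [mul_div_cancel₀ W hV.ne', sub_self, add_zero]

lemma sum_mul_log_div_le_of_sum_le {ι : Type*} (s : Finset ι) {w v : ι → ℝ} {C : ℝ}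
    (hw : ∀ i ∈ s, 0 < w i) (hv : ∀ i ∈ s, 0 < v i) (hC : ∑ i ∈ s, v i ≤ C) :
    ∑ i ∈ s, w i * log (v i / w i) ≤ (∑ i ∈ s, w i) * log (C / ∑ i ∈ s, w i) := by
  rcases s.eq_empty_or_nonempty with rfl | hs
  · simp
  refine (sum_mul_log_div_le s hw hv).trans ?_
  have hW : 0 < ∑ i ∈ s, w i := sum_pos hw hs
  have hV : 0 < ∑ i ∈ s, v i := sum_pos hv hs
  gcongr

end Real

theorem stmt17 {n : ℕ} (B B' : Fin n → ℝ) (hB : ∀ i, 0 < B i) (hB' : ∀ i, 0 ≤ B' i)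
    (hsum : ∑ i, B' i ≤ ∑ i, B i) :
    ∑ i, (B i / ∑ k, B k) * Real.log (max 1 (B' i / B i)) ≤ (Real.exp 1)⁻¹ := by
  set 𝔅 := ∑ k, B k
  set A := univ.filter fun i => 1 ≤ B' i / B i
  set s := ∑ i ∈ A, B i
  have h𝔅 : 0 ≤ 𝔅 := sum_nonneg fun i _ => (hB i).le
  have hs : 0 ≤ s := sum_nonneg fun i _ => (hB i).le
  have hle : ∀ i ∈ A, B i ≤ B' i := fun i hi => (one_le_div (hB i)).mp (mem_filter.mp hi).2
  have hA : ∑ i ∈ A, B' i ≤ 𝔅 :=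
    (sum_le_sum_of_subset_of_nonneg A.subset_univ fun i _ _ => hB' i).trans hsum
  have hlogsum : ∑ i ∈ A, B i * log (B' i / B i) ≤ s * log (𝔅 / s) :=
    sum_mul_log_div_le_of_sum_le A (fun i _ => hB i) (fun i hi => (hB i).trans_le (hle i hi)) hA
  calc ∑ i, (B i / 𝔅) * log (max 1 (B' i / B i))
      = (∑ i ∈ A, B i * log (B' i / B i)) / 𝔅 := by
        simp_rw [sum_mul_log_max_one, sum_div, div_mul_eq_mul_div]; rfl
    _ ≤ s * log (𝔅 / s) / 𝔅 := div_le_div_of_nonneg_right hlogsum h𝔅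
    _ = s / 𝔅 * log (s / 𝔅)⁻¹ := by rw [inv_div, mul_div_right_comm]
    _ ≤ (exp 1)⁻¹ := mul_log_inv_le_inv_exp_one (div_nonneg hs h𝔅)
end

section
/- Let u be a utility function with budget B > 0 whose Marshallian demand x^D(p, B) = argmax { u(x) : x ≥ 0, ⟨p, x⟩ ≤ B } is single-valued and satisfies the gross substitutes and normal goods properties. Then for any prices p ≫ 0 and p' ≫ 0 and any good j with p_j/p'_j ≥ max{ max_k (p_k/p'_k), 1 }, we have x^D_j(p, B) ≤ x^D_j(p', B). -/
theorem stmt18 {m : ℕ} (u : (Fin m → ℝ) → ℝ)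
    (xD : (Fin m → ℝ) → ℝ → (Fin m → ℝ))
    (hdemand : ∀ p : Fin m → ℝ, (∀ j, 0 < p j) → ∀ B : ℝ, 0 < B →
      0 ≤ xD p B ∧ ∑ j, p j * xD p B j ≤ B ∧
      ∀ y : Fin m → ℝ, 0 ≤ y → ∑ j, p j * y j ≤ B →
        u y ≤ u (xD p B) ∧ (u y = u (xD p B) → y = xD p B))
    (hGS : ∀ B : ℝ, 0 < B → ∀ p p' : Fin m → ℝ, (∀ j, 0 < p j) → p ≤ p' →
      ∀ j, p j = p' j → xD p B j ≤ xD p' B j)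
    (hNG : ∀ p : Fin m → ℝ, (∀ j, 0 < p j) → ∀ B B' : ℝ, 0 < B → B < B' →
      ∀ j, xD p B j ≤ xD p B' j)
    (hscale : ∀ p : Fin m → ℝ, (∀ j, 0 < p j) → ∀ B : ℝ, 0 < B → ∀ α : ℝ, 0 < α →
      xD (α⁻¹ • p) (B / α) = xD p B)
    (B : ℝ) (hB : 0 < B)
    (p p' : Fin m → ℝ) (hp : ∀ j, 0 < p j) (hp' : ∀ j, 0 < p' j)
    (j : Fin m) (hj : ∀ k, p k / p' k ≤ p j / p' j) (hj1 : 1 ≤ p j / p' j) :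
    xD p B j ≤ xD p' B j := by
  set α := p j / p' j with hα
  have hα0 : 0 < α := lt_of_lt_of_le one_pos hj1
  set q : Fin m → ℝ := α⁻¹ • p with hq
  have hq0 : ∀ k, 0 < q k := fun k => mul_pos (inv_pos.mpr hα0) (hp k)
  have hqle : q ≤ p' := by
    intro k
    have hk : p k ≤ α * p' k := (div_le_iff₀ (hp' k)).mp (hj k)
    simp only [hq, Pi.smul_apply, smul_eq_mul]
    rw [inv_mul_le_iff₀ hα0]
    linarith
  have hqj : q j = p' j := by
    simp only [hq, Pi.smul_apply, smul_eq_mul, hα]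
    field_simp [(hp j).ne', (hp' j).ne']
  have hsc : xD q (B / α) = xD p B := hscale p hp B hB α hα0
  have h1 : xD p B j ≤ xD q B j := by
    rw [← hsc]
    rcases eq_or_lt_of_le hj1 with h | h
    · rw [← h, div_one]
    · exact hNG q hq0 (B / α) B (div_pos hB hα0)
        ((div_lt_iff₀ hα0).mpr (by nlinarith)) j
  have h2 : xD q B j ≤ xD p' B j := hGS B hB q p' hq0 hqle j hqj
  linarith
end
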